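/- arXiv:1904.12221 — 8 statements merged into one kernel-verified Lean document; each statement's English description precedes it below -/
import Mathlib

section
/- Let T be an outgoing directed spanning tree of G rooted at v_r with edge-index set S, and let D = M_out^r[S] * N_in^r[S] be the (p-1)×(p-1) matrix obtained from the adjacency structure of T restricted to the non-root vertices (so D_{ij} = 1 iff T has an edge from the i-th non-root vertex to the j-th non-root vertex). Then D is nilpotent; in fact D^{p-1} = 0. -/
open Matrix

variable {p q : ℕ}

/-- In-incidence matrix: `[N_in]_{ki} = 1` iff edge `k` points to vertex `i`. -/
def Nin (tgt : Fin q → Fin p) : Matrix (Fin q) (Fin p) ℝ :=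
  Matrix.of fun k i => if tgt k = i then (1 : ℝ) else 0

/-- Out-incidence matrix: `[M_out]_{ik} = 1` iff edge `k` points from vertex `i`. -/
def Mout (src : Fin q → Fin p) : Matrix (Fin p) (Fin q) ℝ :=
  Matrix.of fun i k => if src k = i then (1 : ℝ) else 0

/-- Diagonal in-degree matrix. -/
def Din (tgt : Fin q → Fin p) : Matrix (Fin p) (Fin p) ℝ :=
  Matrix.diagonal fun i => (Fintype.card {k : Fin q // tgt k = i} : ℝ)

/-- Diagonal out-degree matrix. -/
def Dout (src : Fin q → Fin p) : Matrix (Fin p) (Fin p) ℝ :=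
  Matrix.diagonal fun i => (Fintype.card {k : Fin q // src k = i} : ℝ)

/-- Vertex-adjacency matrix: `[A_v]_{ij} = 1` iff there is an edge from `i` to `j`. -/
def Av (src tgt : Fin q → Fin p) : Matrix (Fin p) (Fin p) ℝ :=
  Matrix.of fun i j => if ∃ k, src k = i ∧ tgt k = j then (1 : ℝ) else 0

/-- `S` is the edge set of an outgoing directed spanning tree rooted at `r`:
every non-root vertex has in-degree `1` in `S`, the root has in-degree `0`,
and there are no directed cycles among the edges of `S`. -/
def IsOutTree (src tgt : Fin q → Fin p) (r : Fin p) (S : Finset (Fin q)) : Prop :=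
  (∀ i, i ≠ r → ∃! k, k ∈ S ∧ tgt k = i) ∧
  (∀ k ∈ S, tgt k ≠ r) ∧
  (∀ i, ¬ Relation.TransGen (fun a b => ∃ k ∈ S, src k = a ∧ tgt k = b) i i)

/-- `S` is the edge set of an incoming directed spanning tree rooted at `r`:
every non-root vertex has out-degree `1` in `S`, the root has out-degree `0`,
and there are no directed cycles among the edges of `S`. -/
def IsInTree (src tgt : Fin q → Fin p) (r : Fin p) (S : Finset (Fin q)) : Prop :=
  (∀ i, i ≠ r → ∃! k, k ∈ S ∧ src k = i) ∧
  (∀ k ∈ S, src k ≠ r) ∧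
  (∀ i, ¬ Relation.TransGen (fun a b => ∃ k ∈ S, src k = a ∧ tgt k = b) i i)

/-- If `S` is the edge set of an outgoing directed spanning tree rooted at `r`, then
the matrix `D = M_out^r[S] * N_in^r[S]` (the adjacency structure of the tree restricted
to the non-root vertices) is nilpotent; in fact `D ^ (p - 1) = 0`. -/
theorem tree_adjacency_nilpotent (p q : ℕ) (src tgt : Fin q → Fin p)
    (hloop : ∀ k, src k ≠ tgt k)
    (hsimple : Function.Injective fun k => (src k, tgt k))
    (r : Fin p) (S : Finset (Fin q)) (hT : IsOutTree src tgt r S)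
    (D : Matrix {i : Fin p // i ≠ r} {i : Fin p // i ≠ r} ℝ)
    (hD : ∀ i j, D i j = ∑ k ∈ S, Mout src i.val k * Nin tgt k j.val) :
    D ^ (p - 1) = 0 := by
  set Rel : Fin p → Fin p → Prop := fun a b => ∃ k ∈ S, src k = a ∧ tgt k = b with hRel
  -- D entries detect the edge relation
  have hDrel : ∀ i j : {i : Fin p // i ≠ r}, D i j ≠ 0 → Rel i.val j.val := by
    intro i j h
    by_contra hnot
    apply h
    rw [hD]
    apply Finset.sum_eq_zero
    intro k hk
    simp only [Mout, Nin, Matrix.of_apply]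
    by_cases h1 : src k = i.val
    · by_cases h2 : tgt k = j.val
      · exact absurd ⟨k, hk, h1, h2⟩ hnot
      · simp [h2]
    · simp [h1]
  -- chains from nonzero entries of powers
  have hchain : ∀ n (i j : {i : Fin p // i ≠ r}), (D ^ n) i j ≠ 0 →
      ∃ f : Fin (n + 1) → {i : Fin p // i ≠ r}, f 0 = i ∧ f (Fin.last n) = j ∧
        ∀ m : Fin n, Rel (f m.castSucc).val (f m.succ).val := by
    intro n
    induction n with
    | zero =>
      intro i j h
      rw [pow_zero] at h
      have hij : i = j := by
        by_contra hne
        exact h (Matrix.one_apply_ne hne)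
      exact ⟨fun _ => i, rfl, hij ▸ rfl, fun m => m.elim0⟩
    | succ n ih =>
      intro i j h
      rw [pow_succ, Matrix.mul_apply] at h
      obtain ⟨x, hx⟩ : ∃ x, (D ^ n) i x * D x j ≠ 0 := by
        by_contra hall
        push_neg at hall
        exact h (Finset.sum_eq_zero fun x _ => hall x)
      have h1 : (D ^ n) i x ≠ 0 := fun h0 => hx (by rw [h0, zero_mul])
      have h2 : D x j ≠ 0 := fun h0 => hx (by rw [h0, mul_zero])
      obtain ⟨f, hf0, hfl, hfs⟩ := ih i x h1
      refine ⟨Fin.snoc f j, ?_, ?_, ?_⟩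
      · rw [show (0 : Fin (n + 2)) = Fin.castSucc 0 from rfl, Fin.snoc_castSucc]
        exact hf0
      · simp [Fin.snoc_last]
      · intro m
        refine Fin.lastCases ?_ ?_ m
        · rw [Fin.snoc_castSucc, Fin.succ_last, Fin.snoc_last, hfl]
          exact hDrel x j h2
        · intro m'
          rw [Fin.succ_castSucc, Fin.snoc_castSucc, Fin.snoc_castSucc]
          exact hfs m'
  -- chains give transitive closure
  have htrans : ∀ n (f : Fin (n + 1) → {i : Fin p // i ≠ r}),
      (∀ m : Fin n, Rel (f m.castSucc).val (f m.succ).val) →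
      ∀ a b : Fin (n + 1), a < b → Relation.TransGen Rel (f a).val (f b).val := by
    intro n f hf a b hab
    obtain ⟨a, ha⟩ := a
    obtain ⟨b, hb⟩ := b
    simp only [Fin.mk_lt_mk] at hab
    induction b with
    | zero => omega
    | succ b ihb =>
      have hb' : b < n := by omega
      have hstep : Rel (f ⟨b, by omega⟩).val (f ⟨b + 1, hb⟩).val := by
        have := hf ⟨b, hb'⟩
        simpa [Fin.castSucc, Fin.succ] using this
      rcases Nat.lt_or_ge a b with hab' | hab'
      · exact (ihb (by omega) hab').tail hstep
      · have : a = b := by omega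
        subst this
        exact Relation.TransGen.single hstep
  -- main argument
  have hp : 0 < p := r.pos
  have hcard : Fintype.card {i : Fin p // i ≠ r} = p - 1 := by
    have := Fintype.card_subtype_compl (fun i : Fin p => i = r)
    simpa using this
  ext i j
  by_contra h
  obtain ⟨f, hf0, hfl, hfs⟩ := hchain (p - 1) i j h
  have hlt : Fintype.card {i : Fin p // i ≠ r} < Fintype.card (Fin (p - 1 + 1)) := by
    rw [hcard, Fintype.card_fin]; omega
  obtain ⟨a, b, hne, heq⟩ := Fintype.exists_ne_map_eq_of_card_lt f hlt
  rcases lt_or_gt_of_ne hne with hlt' | hlt'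
  · exact hT.2.2 (f a).val (heq ▸ htrans _ f hfs a b hlt')
  · exact hT.2.2 (f b).val (heq ▸ htrans _ f hfs b a hlt')
end

section
/- Let G' be a directed subgraph of G on all p vertices with p-1 edges indexed by S. If some vertex v_i ≠ v_r has in-degree 0 in G', or in-degree at least 2 in G', or if the root v_r has in-degree ≥ 1 in G', then det(N_in^r[S]) = 0. -/
open Matrix

variable {p q : ℕ}

/-- Let `S` index `p - 1` edges of a spanning subgraph `G'`. If some non-root vertex
has in-degree `0` or in-degree at least `2` in `G'`, or the root has in-degree at least
`1` in `G'`, then `det (N_in^r[S]) = 0` (rows indexed by the edges of `S` via any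
bijection `e`, column of the root deleted). -/
theorem det_nin_reduced_eq_zero (p q : ℕ) (src tgt : Fin q → Fin p)
    (hloop : ∀ k, src k ≠ tgt k)
    (hsimple : Function.Injective fun k => (src k, tgt k))
    (r : Fin p) (S : Finset (Fin q)) (hS : S.card = p - 1)
    (e : {i : Fin p // i ≠ r} ≃ {k : Fin q // k ∈ S})
    (hbad : (∃ i, i ≠ r ∧
        ((∀ k ∈ S, tgt k ≠ i) ∨
         (∃ k₁ ∈ S, ∃ k₂ ∈ S, k₁ ≠ k₂ ∧ tgt k₁ = i ∧ tgt k₂ = i))) ∨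
      (∃ k ∈ S, tgt k = r)) :
    (Matrix.of fun i j : {i : Fin p // i ≠ r} => Nin tgt (e i).val j.val).det = 0 := by
  rcases hbad with ⟨i, hir, hzero | ⟨k₁, hk₁, k₂, hk₂, hne, ht₁, ht₂⟩⟩ | ⟨k, hk, htk⟩
  · apply Matrix.det_eq_zero_of_column_eq_zero ⟨i, hir⟩
    intro l
    simp only [Matrix.of_apply, Nin]
    rw [if_neg (hzero _ (e l).2)]
  · apply Matrix.det_zero_of_row_eq (i := e.symm ⟨k₁, hk₁⟩) (j := e.symm ⟨k₂, hk₂⟩)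
    · intro h
      apply hne
      have := congrArg (fun x => (e x).val) h
      simpa using this
    · funext j
      simp only [Matrix.of_apply, Nin, Equiv.apply_symm_apply, ht₁, ht₂]
  · apply Matrix.det_eq_zero_of_row_eq_zero (e.symm ⟨k, hk⟩)
    intro j
    simp only [Matrix.of_apply, Nin, Equiv.apply_symm_apply, htk]
    rw [if_neg (Ne.symm j.2)]
end

section
/- Let G' be a directed subgraph of G on all p vertices with p-1 edges indexed by S. If G' contains a directed cycle, then det((N_in^r[S])^T - M_out^r[S]) = 0, since the columns of this matrix indexed by the edges of the cycle sum to the zero vector. -/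
open Matrix

variable {p q : ℕ}

theorem Matrix.det_eq_zero_of_sum_cols_eq_zero {n R : Type*} [Fintype n] [DecidableEq n]
    [CommRing R] [IsDomain R] (M : Matrix n n R) {s : Finset n} (hs : s.Nonempty)
    (h : ∀ i, ∑ j ∈ s, M i j = 0) : M.det = 0 := by
  refine exists_mulVec_eq_zero_iff.mp ⟨fun j => if j ∈ s then 1 else 0, ?_, ?_⟩
  · obtain ⟨j, hj⟩ := hs
    exact fun h0 => one_ne_zero (α := R) (by simpa [hj] using congrFun h0 j)
  · ext i
    simp [mulVec, dotProduct, h i]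

theorem sum_Nin_sub_Mout_eq_zero_of_cycle {n : ℕ} (src tgt : Fin q → Fin p)
    (v : Fin (n + 1) → Fin p) (κ : Fin (n + 1) → Fin q)
    (hκ : ∀ j, src (κ j) = v j ∧ tgt (κ j) = v (j + 1)) (i : Fin p) :
    ∑ j, (Nin tgt (κ j) i - Mout src i (κ j)) = 0 := by
  simp only [Nin, Mout, of_apply, (hκ _).1, (hκ _).2, Finset.sum_sub_distrib]
  -- each vertex of the cycle is entered once and left once
  rw [Fintype.sum_equiv (Equiv.addRight 1) (fun j => if v (j + 1) = i then (1 : ℝ) else 0)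
    (fun j => if v j = i then 1 else 0) fun _ => rfl, sub_self]

theorem det_B_eq_zero_of_cycle_general (p q : ℕ) (src tgt : Fin q → Fin p)
    (r : Fin p) (S : Finset (Fin q))
    (e : {i : Fin p // i ≠ r} ≃ {k : Fin q // k ∈ S})
    (hcycle : ∃ (n : ℕ) (v : Fin (n + 1) → Fin p) (κ : Fin (n + 1) → Fin q),
      Function.Injective v ∧ Function.Injective κ ∧
      ∀ j, κ j ∈ S ∧ src (κ j) = v j ∧ tgt (κ j) = v (j + 1)) :
    (Matrix.of fun i j : {i : Fin p // i ≠ r} =>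
        Nin tgt (e j).val i.val - Mout src i.val (e j).val).det = 0 := by
  obtain ⟨n, v, κ, -, hκ, hcyc⟩ := hcycle
  let col : Fin (n + 1) → {i : Fin p // i ≠ r} := fun j => e.symm ⟨κ j, (hcyc j).1⟩
  have hcol : Function.Injective col := fun a b hab =>
    hκ (congrArg Subtype.val (e.symm.injective hab))
  refine det_eq_zero_of_sum_cols_eq_zero _ (Finset.univ_nonempty.image col) fun i => ?_
  rw [Finset.sum_image fun a _ b _ hab => hcol hab]
  simpa [col] using
    sum_Nin_sub_Mout_eq_zero_of_cycle src tgt v κ (fun j => (hcyc j).2) i.val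

/-- Let `S` index `p - 1` edges of a spanning subgraph `G'`. If `G'` contains a
directed cycle (distinct vertices `v 0, …, v n` and distinct edges `κ j` from `v j`
to `v (j+1)`, indices mod `n + 1`), then `det ((N_in^r[S])ᵀ - M_out^r[S]) = 0`
(columns indexed by the edges of `S` via any bijection `e`, root's row/column deleted). -/
theorem det_B_eq_zero_of_cycle (p q : ℕ) (src tgt : Fin q → Fin p)
    (hloop : ∀ k, src k ≠ tgt k)
    (hsimple : Function.Injective fun k => (src k, tgt k))
    (r : Fin p) (S : Finset (Fin q)) (hS : S.card = p - 1)
    (e : {i : Fin p // i ≠ r} ≃ {k : Fin q // k ∈ S})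
    (hcycle : ∃ (n : ℕ) (v : Fin (n + 1) → Fin p) (κ : Fin (n + 1) → Fin q),
      Function.Injective v ∧ Function.Injective κ ∧
      ∀ j, κ j ∈ S ∧ src (κ j) = v j ∧ tgt (κ j) = v (j + 1)) :
    (Matrix.of fun i j : {i : Fin p // i ≠ r} =>
        Nin tgt (e j).val i.val - Mout src i.val (e j).val).det = 0 :=
  det_B_eq_zero_of_cycle_general p q src tgt r S e hcycle
end

section
/- (Tutte's matrix tree theorem, outgoing version) For a finite directed graph G with Laplacian L_1 = D_in - A_v and any vertex v_r, the number of outgoing directed spanning trees of G rooted at v_r equals det(L_1^r), where L_1^r is obtained from L_1 by deleting the r-th row and r-th column. -/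
open Matrix

variable {p q : ℕ}

/-- The column-selection matrix for good `f`. -/
private def Mf (src tgt : Fin q → Fin p) (r : Fin p) (f : {i : Fin p // i ≠ r} → Fin q) :
    Matrix {i : Fin p // i ≠ r} {i : Fin p // i ≠ r} ℝ :=
  Matrix.of fun i j =>
    (if tgt (f j) = i.val then (1 : ℝ) else 0) - (if src (f j) = i.val then (1 : ℝ) else 0)

private lemma tRel_iff {src tgt : Fin q → Fin p} {r : Fin p}
    {f : {i : Fin p // i ≠ r} → Fin q} (hf : ∀ j, tgt (f j) = j.val) (a b : Fin p) :
    (∃ k ∈ Finset.image f Finset.univ, src k = a ∧ tgt k = b) ↔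
      ∃ hb : b ≠ r, src (f ⟨b, hb⟩) = a := by
  constructor
  · rintro ⟨k, hk, hs, ht⟩
    obtain ⟨j, -, rfl⟩ := Finset.mem_image.1 hk
    have hb : b ≠ r := by rw [← ht, hf j]; exact j.2
    refine ⟨hb, ?_⟩
    have hjb : (⟨b, hb⟩ : {i : Fin p // i ≠ r}) = j := Subtype.ext (show b = j.val by rw [← ht, hf j])
    rw [hjb]; exact hs
  · rintro ⟨hb, hsrc⟩
    exact ⟨f ⟨b, hb⟩, Finset.mem_image_of_mem _ (Finset.mem_univ _), hsrc, hf _⟩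

private lemma sum_indicator_image {α β : Type*} [DecidableEq β] (s : Finset α) (g : α → β)
    (hg : ∀ x ∈ s, ∀ y ∈ s, g x = g y → x = y) (y : β) :
    (∑ t ∈ s, if g t = y then (1:ℝ) else 0) = if y ∈ s.image g then 1 else 0 := by
  by_cases hy : y ∈ s.image g
  · obtain ⟨t₀, ht₀, rfl⟩ := Finset.mem_image.1 hy
    rw [if_pos hy, Finset.sum_eq_single t₀]
    · rw [if_pos rfl]
    · intro t ht hne
      exact if_neg fun h => hne (hg t ht t₀ ht₀ h)
    · intro h; exact absurd ht₀ h
  · rw [if_neg hy]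
    apply Finset.sum_eq_zero
    intro t ht
    exact if_neg fun h => hy (Finset.mem_image.2 ⟨t, ht, h⟩)

private lemma transGen_chain {α : Type*} {R : α → α → Prop} {a b : α}
    (h : Relation.TransGen R a b) :
    ∃ m : ℕ, 0 < m ∧ ∃ c : ℕ → α, c 0 = a ∧ c m = b ∧ ∀ t < m, R (c t) (c (t + 1)) := by
  induction h with
  | @single b hb =>
    exact ⟨1, one_pos, fun t => if t = 0 then a else b, by simp, by simp, by
      intro t ht
      interval_cases t
      simpa using hb⟩
  | @tail b' c' hab hbc ih =>
    obtain ⟨m, hm, c, h0, hmb, hstep⟩ := ih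
    refine ⟨m + 1, Nat.succ_pos _, fun t => if t ≤ m then c t else c', by simp [h0], by simp, ?_⟩
    intro t ht
    rcases Nat.lt_or_ge t m with h | h
    · simpa [Nat.le_of_lt h, Nat.succ_le_of_lt h] using hstep t h
    · have : t = m := by omega
      subst this
      simp [hmb, hbc]

private lemma det_Mf_cyclic {src tgt : Fin q → Fin p} {r : Fin p}
    {f : {i : Fin p // i ≠ r} → Fin q} (hf : ∀ j, tgt (f j) = j.val) {i₀ : Fin p}
    (hcyc : Relation.TransGen
      (fun a b => ∃ k ∈ Finset.image f Finset.univ, src k = a ∧ tgt k = b) i₀ i₀) :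
    (Mf src tgt r f).det = 0 := by
  classical
  set G : Fin p → Fin p := fun x => if h : x ≠ r then src (f ⟨x, h⟩) else x with hG
  have hGv : ∀ j : {i : Fin p // i ≠ r}, G j.val = src (f j) := by
    intro j; simp only [hG, dif_pos j.2]
  obtain ⟨m, hm, c, hc0, hcm, hstep⟩ := transGen_chain hcyc
  have hstep' : ∀ t < m, c (t + 1) ≠ r ∧ G (c (t + 1)) = c t := by
    intro t ht
    obtain ⟨hb, hs⟩ := (tRel_iff hf _ _).1 (hstep t ht)
    refine ⟨hb, ?_⟩
    rw [show G (c (t+1)) = src (f ⟨c (t+1), hb⟩) from hGv ⟨c (t+1), hb⟩, hs]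
  have hiter : ∀ t, t ≤ m → G^[t] i₀ = c (m - t) := by
    intro t
    induction t with
    | zero => intro _; simpa using hcm.symm
    | succ t ih =>
      intro ht
      rw [Function.iterate_succ_apply', ih (by omega)]
      have h1 : m - t = (m - (t + 1)) + 1 := by omega
      rw [h1]
      exact (hstep' _ (by omega)).2
  have hper : Function.IsPeriodicPt G m i₀ := by
    show G^[m] i₀ = i₀
    rw [hiter m le_rfl]; simpa using hc0
  have hne : ∀ t, G^[t] i₀ ≠ r := by
    intro t
    rw [← hper.iterate_mod_apply t]
    have h2 : t % m < m := Nat.mod_lt _ hm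
    rw [hiter _ (le_of_lt h2)]
    have h3 : m - t % m = (m - t % m - 1) + 1 := by omega
    rw [h3]
    exact (hstep' _ (by omega)).1
  have hmem : i₀ ∈ Function.periodicPts G := Function.mk_mem_periodicPts hm hper
  set m₀ := Function.minimalPeriod G i₀ with hm₀
  have hm₀pos : 0 < m₀ := Function.minimalPeriod_pos_of_mem_periodicPts hmem
  have hinj : Set.InjOn (fun t => G^[t] i₀) (Set.Iio m₀) :=
    Function.iterate_injOn_Iio_minimalPeriod
  set C : Finset (Fin p) := (Finset.range m₀).image (fun t => G^[t] i₀) with hC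
  have hCr : ∀ x ∈ C, x ≠ r := by
    intro x hx
    obtain ⟨t, -, rfl⟩ := Finset.mem_image.1 hx
    exact hne t
  have hi₀r : i₀ ≠ r := by simpa using hne 0
  have hi₀C : i₀ ∈ C := by
    refine Finset.mem_image.2 ⟨0, Finset.mem_range.2 hm₀pos, by simp⟩
  set v : {i : Fin p // i ≠ r} → ℝ := fun j => if j.val ∈ C then 1 else 0 with hv
  rw [← Matrix.exists_mulVec_eq_zero_iff]
  refine ⟨v, ?_, ?_⟩
  · intro h0
    have h1 : v ⟨i₀, hi₀r⟩ = 0 := congrFun h0 _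
    rw [hv] at h1
    simp only [hi₀C, if_pos] at h1
    exact one_ne_zero h1
  · funext i'
    show ∑ j, Mf src tgt r f i' j * v j = 0
    have hterm : ∀ j : {i : Fin p // i ≠ r}, Mf src tgt r f i' j * v j =
        ((if j.val = i'.val then (1:ℝ) else 0) - (if G j.val = i'.val then 1 else 0))
          * (if j.val ∈ C then 1 else 0) := by
      intro j
      rw [Mf, Matrix.of_apply, hf j, hGv j, hv]
    rw [Finset.sum_congr rfl fun j _ => hterm j]
    rw [← Finset.sum_subtype (Finset.univ.filter (· ≠ r))
      (by intro x; simp) (fun x => ((if x = i'.val then (1:ℝ) else 0)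
        - (if G x = i'.val then 1 else 0)) * (if x ∈ C then 1 else 0))]
    have hsimpl : ∀ x ∈ Finset.univ.filter (· ≠ r),
        ((if x = i'.val then (1:ℝ) else 0) - (if G x = i'.val then 1 else 0))
          * (if x ∈ C then 1 else 0)
        = if x ∈ C then ((if x = i'.val then (1:ℝ) else 0)
            - (if G x = i'.val then 1 else 0)) else 0 := by
      intro x _
      split_ifs <;> ring
    rw [Finset.sum_congr rfl hsimpl, ← Finset.sum_filter]
    have hCfil : (Finset.univ.filter (· ≠ r)).filter (· ∈ C) = C := by
      ext x
      simp only [Finset.mem_filter, Finset.mem_univ, true_and]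
      exact ⟨fun h => h.2, fun h => ⟨hCr x h, h⟩⟩
    rw [hCfil, Finset.sum_sub_distrib]
    have h1 : ∑ x ∈ C, (if x = i'.val then (1:ℝ) else 0)
        = if i'.val ∈ C then 1 else 0 := by
      rw [Finset.sum_ite_eq' C i'.val (fun _ => (1:ℝ))]
    have hinjC : ∀ x ∈ Finset.range m₀, ∀ y ∈ Finset.range m₀,
        G^[x] i₀ = G^[y] i₀ → x = y := by
      intro x hx y hy hxy
      exact hinj (Finset.mem_range.1 hx) (Finset.mem_range.1 hy) hxy
    have h2 : ∑ x ∈ C, (if G x = i'.val then (1:ℝ) else 0)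
        = if i'.val ∈ C then 1 else 0 := by
      rw [hC, Finset.sum_image hinjC]
      have e1 : ∀ t ∈ Finset.range m₀, (if G (G^[t] i₀) = i'.val then (1:ℝ) else 0)
          = (if G^[(t+1) % m₀] i₀ = i'.val then (1:ℝ) else 0) := by
        intro t _
        rw [← Function.iterate_succ_apply' G t i₀, ← Function.iterate_mod_minimalPeriod_eq]
      rw [Finset.sum_congr rfl e1]
      have e2 : ∑ t ∈ Finset.range m₀, (if G^[(t+1) % m₀] i₀ = i'.val then (1:ℝ) else 0)
          = ∑ t ∈ Finset.range m₀, (if G^[t] i₀ = i'.val then (1:ℝ) else 0) := by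
        refine Finset.sum_nbij' (fun t => (t + 1) % m₀) (fun t => (t + (m₀ - 1)) % m₀)
          ?_ ?_ ?_ ?_ ?_
        · intro a ha
          exact Finset.mem_range.2 (Nat.mod_lt _ hm₀pos)
        · intro a ha
          exact Finset.mem_range.2 (Nat.mod_lt _ hm₀pos)
        · intro a ha
          show ((a + 1) % m₀ + (m₀ - 1)) % m₀ = a
          rw [Nat.mod_add_mod, show a + 1 + (m₀ - 1) = a + m₀ by omega,
            Nat.add_mod_right, Nat.mod_eq_of_lt (Finset.mem_range.1 ha)]
        · intro a ha
          show ((a + (m₀ - 1)) % m₀ + 1) % m₀ = a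
          rw [Nat.mod_add_mod, show a + (m₀ - 1) + 1 = a + m₀ by omega,
            Nat.add_mod_right, Nat.mod_eq_of_lt (Finset.mem_range.1 ha)]
        · intro a ha
          rfl
      rw [e2]
      exact sum_indicator_image _ _ hinjC _
    rw [h1, h2, sub_self]

private lemma det_Mf_acyclic {src tgt : Fin q → Fin p} {r : Fin p}
    (hloop : ∀ k, src k ≠ tgt k)
    {f : {i : Fin p // i ≠ r} → Fin q} (hf : ∀ j, tgt (f j) = j.val)
    (hacyc : ∀ i, ¬ Relation.TransGen
      (fun a b => ∃ k ∈ Finset.image f Finset.univ, src k = a ∧ tgt k = b) i i) :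
    (Mf src tgt r f).det = 1 := by
  classical
  set R : Fin p → Fin p → Prop :=
    fun a b => ∃ k ∈ Finset.image f Finset.univ, src k = a ∧ tgt k = b with hR
  set w : {i : Fin p // i ≠ r} → ℕ := fun j =>
    (Finset.univ.filter
      (fun a : {i : Fin p // i ≠ r} => Relation.TransGen R a.val j.val)).card with hw
  have hRsrc : ∀ j : {i : Fin p // i ≠ r}, R (src (f j)) j.val := by
    intro j
    exact ⟨f j, Finset.mem_image_of_mem _ (Finset.mem_univ _), rfl, hf j⟩
  have hmono : ∀ a b : {i : Fin p // i ≠ r}, R a.val b.val → w a < w b := by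
    intro a b hab
    apply Finset.card_lt_card
    rw [Finset.ssubset_iff_of_subset]
    · refine ⟨a, ?_, ?_⟩
      · simp only [Finset.mem_filter, Finset.mem_univ, true_and]
        exact Relation.TransGen.single hab
      · simp only [Finset.mem_filter, Finset.mem_univ, true_and]
        exact hacyc a.val
    · intro x hx
      simp only [Finset.mem_filter, Finset.mem_univ, true_and] at hx ⊢
      exact hx.tail hab
  have hbt : (Mf src tgt r f).BlockTriangular w := by
    intro i j hij
    have hne : i ≠ j := by
      intro h; subst h; exact lt_irrefl _ hij
    show (if tgt (f j) = i.val then (1:ℝ) else 0) - (if src (f j) = i.val then 1 else 0) = 0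
    rw [hf j, if_neg (fun h => hne (Subtype.ext h.symm)), if_neg, sub_zero]
    intro h
    have := hmono i j (h ▸ hRsrc j)
    omega
  rw [hbt.det]
  apply Finset.prod_eq_one
  intro k _
  have hone : (Mf src tgt r f).toSquareBlock w k = 1 := by
    ext i j
    show (if tgt (f j.val) = i.val.val then (1:ℝ) else 0)
        - (if src (f j.val) = i.val.val then 1 else 0) = (1 : Matrix _ _ ℝ) i j
    by_cases h : i = j
    · subst h
      rw [hf i.val, if_pos rfl, if_neg, sub_zero, Matrix.one_apply_eq]
      intro h
      exact hloop (f i.val) (by rw [h, hf i.val])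
    · have hne : i.val ≠ j.val := fun hh => h (Subtype.ext hh)
      rw [hf j.val, if_neg (fun hh => hne (Subtype.ext hh.symm)), if_neg, sub_zero,
        Matrix.one_apply_ne h]
      intro hh
      have := hmono i.val j.val (hh ▸ hRsrc j.val)
      have hwi : w i.val = k := i.2
      have hwj : w j.val = k := j.2
      omega
  rw [hone, Matrix.det_one]

open Finset in
private lemma det_mul_expand {n m : Type*} [Fintype n] [DecidableEq n] [Fintype m]
    [DecidableEq m] (A : Matrix n m ℝ) (B : Matrix m n ℝ) :
    (A * B).det = ∑ f : n → m, (∏ j, B (f j) j) * (A.submatrix id f).det := by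
  simp only [Matrix.det_apply', Matrix.mul_apply, Matrix.submatrix_apply, id_eq]
  have key : ∀ σ : Equiv.Perm n,
      (Equiv.Perm.sign σ : ℝ) * ∏ j, ∑ k, A (σ j) k * B k j
        = ∑ f : n → m, (Equiv.Perm.sign σ : ℝ) * ∏ j, A (σ j) (f j) * B (f j) j := by
    intro σ
    rw [Finset.prod_univ_sum (fun _ => (univ : Finset m)) (fun j k => A (σ j) k * B k j),
      Fintype.piFinset_univ, Finset.mul_sum]
  rw [Finset.sum_congr rfl fun σ _ => key σ, Finset.sum_comm]
  refine Finset.sum_congr rfl fun f _ => ?_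
  rw [Finset.mul_sum]
  refine Finset.sum_congr rfl fun σ _ => ?_
  rw [Finset.prod_mul_distrib]
  ring

/-- **Tutte's matrix tree theorem, outgoing version.** The number of outgoing directed
spanning trees of `G` rooted at `v_r` equals `det (L₁^r)`, where `L₁^r` is obtained from
the Laplacian `L₁ = D_in - A_v` by deleting the `r`-th row and column. -/
theorem tutte_outgoing (p q : ℕ) (src tgt : Fin q → Fin p)
    (hloop : ∀ k, src k ≠ tgt k)
    (hsimple : Function.Injective fun k => (src k, tgt k))
    (r : Fin p) :
    (Nat.card {S : Finset (Fin q) // IsOutTree src tgt r S} : ℝ) =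
      ((Din tgt - Av src tgt).submatrix
        (fun i : {i : Fin p // i ≠ r} => i.val)
        (fun i : {i : Fin p // i ≠ r} => i.val)).det := by
  classical
  set A : Matrix {i : Fin p // i ≠ r} (Fin q) ℝ := Matrix.of fun i k =>
    (if tgt k = i.val then (1:ℝ) else 0) - (if src k = i.val then (1:ℝ) else 0) with hA
  set B : Matrix (Fin q) {i : Fin p // i ≠ r} ℝ := Matrix.of fun k j =>
    if tgt k = j.val then (1:ℝ) else 0 with hB
  have hLAB : (Din tgt - Av src tgt).submatrix
      (fun i : {i : Fin p // i ≠ r} => i.val) (fun i : {i : Fin p // i ≠ r} => i.val)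
      = A * B := by
    ext i j
    simp only [Matrix.submatrix_apply, Matrix.sub_apply, Din, Av, Matrix.mul_apply,
      hA, hB, Matrix.of_apply, Matrix.diagonal_apply]
    have expand : ∀ k : Fin q,
        ((if tgt k = i.val then (1:ℝ) else 0) - (if src k = i.val then 1 else 0))
          * (if tgt k = j.val then 1 else 0)
        = (if tgt k = i.val then (1:ℝ) else 0) * (if tgt k = j.val then 1 else 0)
          - (if src k = i.val then (1:ℝ) else 0) * (if tgt k = j.val then 1 else 0) := by
      intro k; ring
    rw [Finset.sum_congr rfl fun k _ => expand k, Finset.sum_sub_distrib]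
    have h1 : ∑ k : Fin q, (if tgt k = i.val then (1:ℝ) else 0)
        * (if tgt k = j.val then 1 else 0)
        = if i.val = j.val then (Fintype.card {k : Fin q // tgt k = i.val} : ℝ) else 0 := by
      by_cases hij : i.val = j.val
      · rw [if_pos hij, ← hij]
        have : ∀ k : Fin q, (if tgt k = i.val then (1:ℝ) else 0)
            * (if tgt k = i.val then 1 else 0) = if tgt k = i.val then 1 else 0 := by
          intro k; split_ifs <;> ring
        rw [Finset.sum_congr rfl fun k _ => this k, Finset.sum_boole, Fintype.card_subtype]
      · rw [if_neg hij]
        apply Finset.sum_eq_zero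
        intro k _
        split_ifs with ha hb
        · exact absurd (ha ▸ hb) hij
        · ring
        · ring
        · ring
    have h2 : ∑ k : Fin q, (if src k = i.val then (1:ℝ) else 0)
        * (if tgt k = j.val then 1 else 0)
        = if ∃ k, src k = i.val ∧ tgt k = j.val then (1:ℝ) else 0 := by
      have combine : ∀ k : Fin q, (if src k = i.val then (1:ℝ) else 0)
          * (if tgt k = j.val then 1 else 0)
          = if src k = i.val ∧ tgt k = j.val then (1:ℝ) else 0 := by
        intro k
        by_cases hs : src k = i.val <;> by_cases ht : tgt k = j.val <;>
          simp [hs, ht]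
      rw [Finset.sum_congr rfl fun k _ => combine k]
      by_cases hex : ∃ k, src k = i.val ∧ tgt k = j.val
      · obtain ⟨k₀, hk₀⟩ := hex
        rw [if_pos ⟨k₀, hk₀⟩, Finset.sum_eq_single k₀]
        · rw [if_pos hk₀]
        · intro k _ hne
          apply if_neg
          intro hk
          exact hne (hsimple (show (src k, tgt k) = (src k₀, tgt k₀) by
            rw [hk.1, hk.2, hk₀.1, hk₀.2]))
        · intro h; exact absurd (Finset.mem_univ k₀) h
      · rw [if_neg hex]
        apply Finset.sum_eq_zero
        intro k _
        exact if_neg fun hk => hex ⟨k, hk⟩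
    rw [h1, h2]
  rw [hLAB, det_mul_expand]
  have hsub : ∀ g : {i : Fin p // i ≠ r} → Fin q, A.submatrix id g = Mf src tgt r g := by
    intro g; ext i j; rfl
  have hterm : ∀ g : {i : Fin p // i ≠ r} → Fin q,
      (∏ j, B (g j) j) * (A.submatrix id g).det
      = if (∀ j, tgt (g j) = j.val) ∧ (∀ i, ¬ Relation.TransGen
          (fun a b => ∃ k ∈ Finset.image g Finset.univ, src k = a ∧ tgt k = b) i i)
        then (1:ℝ) else 0 := by
    intro g
    by_cases hg : ∀ j, tgt (g j) = j.val
    · have hprod : (∏ j, B (g j) j) = 1 := by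
        apply Finset.prod_eq_one
        intro j _
        show (if tgt (g j) = j.val then (1:ℝ) else 0) = 1
        rw [if_pos (hg j)]
      rw [hprod, one_mul, hsub g]
      by_cases hac : ∀ i, ¬ Relation.TransGen
          (fun a b => ∃ k ∈ Finset.image g Finset.univ, src k = a ∧ tgt k = b) i i
      · rw [if_pos ⟨hg, hac⟩]
        exact det_Mf_acyclic hloop hg hac
      · rw [if_neg (fun h => hac h.2)]
        push_neg at hac
        obtain ⟨i₀, hi₀⟩ := hac
        exact det_Mf_cyclic hg hi₀
    · rw [if_neg (fun h => hg h.1)]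
      push_neg at hg
      obtain ⟨j₀, hj₀⟩ := hg
      have : (∏ j, B (g j) j) = 0 := by
        apply Finset.prod_eq_zero (Finset.mem_univ j₀)
        show (if tgt (g j₀) = j₀.val then (1:ℝ) else 0) = 0
        rw [if_neg hj₀]
      rw [this, zero_mul]
  rw [Finset.sum_congr rfl fun g _ => hterm g, Finset.sum_boole]
  -- now LHS : Nat.card, RHS : card of filter
  have hcard : Nat.card {S : Finset (Fin q) // IsOutTree src tgt r S}
      = (Finset.univ.filter (fun S => IsOutTree src tgt r S)).card := by
    rw [Nat.card_eq_fintype_card, Fintype.card_subtype]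
  rw [hcard]
  congr 1
  refine (Finset.card_bij
    (fun (g : {i : Fin p // i ≠ r} → Fin q) _ => Finset.image g Finset.univ) ?_ ?_ ?_).symm
  · -- maps into
    intro g hg
    simp only [Finset.mem_filter, Finset.mem_univ, true_and] at hg ⊢
    obtain ⟨hgood, hac⟩ := hg
    refine ⟨?_, ?_, hac⟩
    · intro i hi
      refine ⟨g ⟨i, hi⟩, ⟨Finset.mem_image_of_mem _ (Finset.mem_univ _), hgood _⟩, ?_⟩
      rintro k ⟨hk, htk⟩
      obtain ⟨j, -, rfl⟩ := Finset.mem_image.1 hk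
      have hj : j = ⟨i, hi⟩ := Subtype.ext (show j.val = i by rw [← htk, hgood j])
      rw [hj]
    · intro k hk
      obtain ⟨j, -, rfl⟩ := Finset.mem_image.1 hk
      rw [hgood j]
      exact j.2
  · -- injective
    intro g₁ hg₁ g₂ hg₂ himg
    simp only [Finset.mem_filter, Finset.mem_univ, true_and] at hg₁ hg₂
    have himg' : Finset.image g₁ Finset.univ = Finset.image g₂ Finset.univ := himg
    funext j
    have : g₂ j ∈ Finset.image g₁ Finset.univ := by
      rw [himg']; exact Finset.mem_image_of_mem _ (Finset.mem_univ _)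
    obtain ⟨j', -, hj'⟩ := Finset.mem_image.1 this
    have hval : j'.val = j.val := by rw [← hg₁.1 j', hj', hg₂.1 j]
    rw [← hj', Subtype.ext hval]
  · -- surjective
    intro S hS
    simp only [Finset.mem_filter, Finset.mem_univ, true_and] at hS
    obtain ⟨h1, h2, h3⟩ := hS
    choose g hgS hgt using fun (j : {i : Fin p // i ≠ r}) => (h1 j.val j.2).exists
    have himg : Finset.image g Finset.univ = S := by
      apply Finset.Subset.antisymm
      · intro k hk
        obtain ⟨j, -, rfl⟩ := Finset.mem_image.1 hk
        exact hgS j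
      · intro k hk
        have hkr : tgt k ≠ r := h2 k hk
        have heq : k = g ⟨tgt k, hkr⟩ :=
          (h1 (tgt k) hkr).unique ⟨hk, rfl⟩ ⟨hgS ⟨tgt k, hkr⟩, hgt _⟩
        rw [heq]
        exact Finset.mem_image_of_mem _ (Finset.mem_univ _)
    refine ⟨g, ?_, himg⟩
    simp only [Finset.mem_filter, Finset.mem_univ, true_and]
    exact ⟨hgt, by rw [himg]; exact h3⟩
end

section
/- (Tutte's matrix tree theorem, incoming version) For a finite directed graph G with Laplacian L_2 = D_out - A_v^T and any vertex v_r, the number of incoming directed spanning trees of G rooted at v_r equals det(L_2^r), where L_2^r deletes the r-th row and column of L_2. -/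
open Matrix

variable {p q : ℕ}

/-- Total successor function associated to an edge choice `F`. -/
def mttTau (tgt : Fin q → Fin p) (r : Fin p) (F : {i : Fin p // i ≠ r} → Fin q) :
    Fin p → Fin p :=
  fun a => if h : a = r then r else tgt (F ⟨a, h⟩)

lemma mttTau_ne (tgt : Fin q → Fin p) (r : Fin p) (F : {i : Fin p // i ≠ r} → Fin q)
    {a : Fin p} (h : a ≠ r) : mttTau tgt r F a = tgt (F ⟨a, h⟩) := dif_neg h

lemma mttTau_iterate_r (tgt : Fin q → Fin p) (r : Fin p) (F : {i : Fin p // i ≠ r} → Fin q)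
    (m : ℕ) : (mttTau tgt r F)^[m] r = r :=
  Function.iterate_fixed (by simp [mttTau]) m

lemma mtt_iter_ne_r {tgt : Fin q → Fin p} {r : Fin p} {F : {i : Fin p // i ≠ r} → Fin q}
    {i : Fin p} (hi : i ≠ r) {n : ℕ} (hn : 0 < n) (hcyc : (mttTau tgt r F)^[n] i = i)
    (m : ℕ) : (mttTau tgt r F)^[m] i ≠ r := by
  intro hm
  apply hi
  have h1 : (mttTau tgt r F)^[n * m] i = i := by
    rw [Function.iterate_mul]
    exact Function.iterate_fixed hcyc m
  have h2 : n * m - m + m = n * m := Nat.sub_add_cancel (Nat.le_mul_of_pos_left m hn)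
  calc i = (mttTau tgt r F)^[n * m] i := h1.symm
    _ = (mttTau tgt r F)^[n * m - m] ((mttTau tgt r F)^[m] i) := by
        rw [← Function.iterate_add_apply, h2]
    _ = r := by rw [hm, mttTau_iterate_r]

/-- The row matrix determined by an edge choice `F`. -/
def mttMat (src tgt : Fin q → Fin p) (r : Fin p) (F : {i : Fin p // i ≠ r} → Fin q) :
    Matrix {i : Fin p // i ≠ r} {i : Fin p // i ≠ r} ℝ :=
  Matrix.of fun a j =>
    (if (j : Fin p) = src (F a) then (1 : ℝ) else 0) -
    (if (j : Fin p) = tgt (F a) then (1 : ℝ) else 0)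

lemma mttMat_det_zero (src tgt : Fin q → Fin p) (r : Fin p) (F : {i : Fin p // i ≠ r} → Fin q)
    (hF : ∀ a, src (F a) = (a : Fin p)) {i : Fin p} (hi : i ≠ r) {n : ℕ} (hn : 0 < n)
    (hcyc : (mttTau tgt r F)^[n] i = i) :
    (mttMat src tgt r F).det = 0 := by
  classical
  set τ := mttTau tgt r F with hτ
  set C : Finset (Fin p) := (Finset.range n).image (fun m => τ^[m] i) with hC
  have hCr : ∀ a ∈ C, a ≠ r := by
    intro a ha
    obtain ⟨m, -, rfl⟩ := Finset.mem_image.1 ha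
    exact mtt_iter_ne_r hi hn hcyc m
  have hmaps : ∀ a ∈ C, τ a ∈ C := by
    intro a ha
    obtain ⟨m, hm, rfl⟩ := Finset.mem_image.1 ha
    rw [Finset.mem_range] at hm
    rcases eq_or_lt_of_le (Nat.succ_le_of_lt hm) with h | h
    · refine Finset.mem_image.2 ⟨0, Finset.mem_range.2 hn, ?_⟩
      rw [Function.iterate_zero_apply, ← Function.iterate_succ_apply' τ m i, h, hcyc]
    · exact Finset.mem_image.2 ⟨m + 1, Finset.mem_range.2 h,
        (Function.iterate_succ_apply' τ m i).symm ▸ rfl⟩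
  have hsurj : C ⊆ C.image τ := by
    intro a ha
    obtain ⟨m, hm, rfl⟩ := Finset.mem_image.1 ha
    rw [Finset.mem_range] at hm
    cases m with
    | zero =>
        refine Finset.mem_image.2 ⟨τ^[n - 1] i, ?_, ?_⟩
        · exact Finset.mem_image.2 ⟨n - 1, Finset.mem_range.2 (by omega), rfl⟩
        · rw [← Function.iterate_succ_apply' τ (n - 1) i]
          have : n - 1 + 1 = n := by omega
          simp only [Nat.succ_eq_add_one, this, hcyc, Function.iterate_zero_apply]
    | succ m' =>
        refine Finset.mem_image.2 ⟨τ^[m'] i, ?_, ?_⟩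
        · exact Finset.mem_image.2 ⟨m', Finset.mem_range.2 (by omega), rfl⟩
        · rw [← Function.iterate_succ_apply' τ m' i]
  have himg : C.image τ = C :=
    Finset.Subset.antisymm (Finset.image_subset_iff.2 hmaps) hsurj
  have hinj : Set.InjOn τ C := Finset.injOn_of_card_image_eq (by rw [himg])
  rw [← Matrix.exists_vecMul_eq_zero_iff]
  refine ⟨fun j => if (j : Fin p) ∈ C then 1 else 0, ?_, ?_⟩
  · intro h0
    have hiC : i ∈ C := Finset.mem_image.2 ⟨0, Finset.mem_range.2 hn, rfl⟩
    have := congrFun h0 ⟨i, hi⟩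
    simp [hiC] at this
  · funext j
    show (∑ a : {x : Fin p // x ≠ r}, (if (a : Fin p) ∈ C then (1:ℝ) else 0) *
        mttMat src tgt r F a j) = 0
    have step1 : (∑ a : {x : Fin p // x ≠ r}, (if (a : Fin p) ∈ C then (1:ℝ) else 0) *
        mttMat src tgt r F a j)
        = ∑ a ∈ Finset.univ.filter (fun a : {x : Fin p // x ≠ r} => (a : Fin p) ∈ C),
            mttMat src tgt r F a j := by
      rw [Finset.sum_filter]
      apply Finset.sum_congr rfl
      intro a _
      by_cases h : (a : Fin p) ∈ C <;> simp [h]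
    rw [step1]
    have step2 : ∀ g : Fin p → ℝ,
        (∑ a ∈ Finset.univ.filter (fun a : {x : Fin p // x ≠ r} => (a : Fin p) ∈ C), g a)
        = ∑ c ∈ C, g c := by
      intro g
      refine Finset.sum_bij (fun a _ => (a : Fin p)) ?_ ?_ ?_ ?_
      · intro a ha
        exact (Finset.mem_filter.1 ha).2
      · intro a _ b _ h
        exact Subtype.ext h
      · intro c hc
        exact ⟨⟨c, hCr c hc⟩, Finset.mem_filter.2 ⟨Finset.mem_univ _, hc⟩, rfl⟩
      · intro a _
        rfl
    have hMentry : ∀ a ∈ Finset.univ.filter (fun a : {x : Fin p // x ≠ r} => (a : Fin p) ∈ C),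
        mttMat src tgt r F a j =
          (if (j : Fin p) = (a : Fin p) then (1:ℝ) else 0) -
          (if (j : Fin p) = τ (a : Fin p) then (1:ℝ) else 0) := by
      intro a _
      show (if (j : Fin p) = src (F a) then (1:ℝ) else 0) -
          (if (j : Fin p) = tgt (F a) then (1:ℝ) else 0) = _
      rw [hF a, hτ, mttTau_ne tgt r F a.2]
    rw [Finset.sum_congr rfl hMentry, step2
      (fun c => (if (j : Fin p) = c then (1:ℝ) else 0) - (if (j : Fin p) = τ c then (1:ℝ) else 0)),
      Finset.sum_sub_distrib]
    have e1 : (∑ c ∈ C, if (j : Fin p) = c then (1:ℝ) else 0)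
        = if (j : Fin p) ∈ C then 1 else 0 := by
      rw [Finset.sum_ite_eq]
    have e2 : (∑ c ∈ C, if (j : Fin p) = τ c then (1:ℝ) else 0)
        = if (j : Fin p) ∈ C then 1 else 0 := by
      have e2' := Finset.sum_image (s := C) (g := τ)
        (f := fun b => if (j : Fin p) = b then (1:ℝ) else 0)
        (fun x hx y hy h => hinj hx hy h)
      rw [himg] at e2'
      rw [← e2', Finset.sum_ite_eq]
    rw [e1, e2, sub_self]

lemma mttMat_det_one (src tgt : Fin q → Fin p) (r : Fin p) (F : {i : Fin p // i ≠ r} → Fin q)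
    (hF : ∀ a, src (F a) = (a : Fin p)) (hloop : ∀ k, src k ≠ tgt k)
    (hreach : ∀ a, ∃ m, (mttTau tgt r F)^[m] a = r) :
    (mttMat src tgt r F).det = 1 := by
  classical
  set τ := mttTau tgt r F with hτ
  set d : Fin p → ℕ := fun a => Nat.find (hreach a) with hd
  have hdspec : ∀ a, τ^[d a] a = r := fun a => Nat.find_spec (hreach a)
  have hstep : ∀ a, a ≠ r → d (τ a) < d a := by
    intro a ha
    have h0 : d a ≠ 0 := by
      intro h
      apply ha
      have := hdspec a
      rw [h, Function.iterate_zero_apply] at this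
      exact this
    obtain ⟨k, hk⟩ := Nat.exists_eq_succ_of_ne_zero h0
    have hk' : τ^[k] (τ a) = r := by
      have := hdspec a
      rw [hk, Function.iterate_succ_apply] at this
      exact this
    have : d (τ a) ≤ k := Nat.find_le hk'
    omega
  have hbt : (mttMat src tgt r F).BlockTriangular
      (fun a : {i : Fin p // i ≠ r} => OrderDual.toDual (d (a : Fin p))) := by
    intro a j hlt
    have hlt' : d (a : Fin p) < d (j : Fin p) := hlt
    show (if (j : Fin p) = src (F a) then (1:ℝ) else 0) -
        (if (j : Fin p) = tgt (F a) then (1:ℝ) else 0) = 0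
    rw [if_neg, if_neg, sub_zero]
    · intro h
      have htg : tgt (F a) = τ (a : Fin p) := (mttTau_ne tgt r F a.2).symm
      have := hstep (a : Fin p) a.2
      rw [← htg, ← h] at this
      omega
    · intro h
      rw [hF a] at h
      rw [h] at hlt'
      omega
  rw [hbt.det]
  apply Finset.prod_eq_one
  intro m _
  have hblock : (mttMat src tgt r F).toSquareBlock
      (fun a : {i : Fin p // i ≠ r} => OrderDual.toDual (d (a : Fin p))) m = 1 := by
    ext a j
    rw [Matrix.toSquareBlock_def]
    by_cases haj : a = j
    · subst haj
      rw [Matrix.one_apply_eq]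
      show (if ((a : {i : Fin p // i ≠ r}) : Fin p) = src (F a) then (1:ℝ) else 0) -
          (if ((a : {i : Fin p // i ≠ r}) : Fin p) = tgt (F a) then (1:ℝ) else 0) = 1
      rw [if_pos (hF _).symm, if_neg, sub_zero]
      intro h
      exact hloop (F a) (by rw [hF, ← h])
    · rw [Matrix.one_apply_ne haj]
      show (if ((j : {i : Fin p // i ≠ r}) : Fin p) = src (F a) then (1:ℝ) else 0) -
          (if ((j : {i : Fin p // i ≠ r}) : Fin p) = tgt (F a) then (1:ℝ) else 0) = 0
      rw [if_neg, if_neg, sub_zero]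
      · intro h
        have htg : tgt (F a) = τ ((a : {i : Fin p // i ≠ r}) : Fin p) :=
          (mttTau_ne tgt r F (a : {i : Fin p // i ≠ r}).2).symm
        have hda : d ((a : {i : Fin p // i ≠ r}) : Fin p) = OrderDual.ofDual m :=
          congrArg OrderDual.ofDual a.2
        have hdj : d ((j : {i : Fin p // i ≠ r}) : Fin p) = OrderDual.ofDual m :=
          congrArg OrderDual.ofDual j.2
        have := hstep ((a : {i : Fin p // i ≠ r}) : Fin p) (a : {i : Fin p // i ≠ r}).2
        rw [← htg, ← h] at this
        omega
      · intro h
        rw [hF] at h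
        exact haj (Subtype.ext (Subtype.ext h)).symm
  rw [hblock, Matrix.det_one]

lemma mtt_reach (tgt : Fin q → Fin p) (r : Fin p) (F : {i : Fin p // i ≠ r} → Fin q)
    (hnc : ∀ i, i ≠ r → ∀ n, 0 < n → (mttTau tgt r F)^[n] i ≠ i) (a : Fin p) :
    ∃ m, (mttTau tgt r F)^[m] a = r := by
  by_contra h
  push_neg at h
  obtain ⟨m, m', hne, heq⟩ := Fintype.exists_ne_map_eq_of_card_lt
    (fun m : Fin (p + 1) => (mttTau tgt r F)^[(m : ℕ)] a) (by simp)
  have hvne : (m : ℕ) ≠ (m' : ℕ) := fun hv => hne (Fin.ext hv)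
  rcases Nat.lt_or_ge (m : ℕ) (m' : ℕ) with hlt | hge
  · refine hnc ((mttTau tgt r F)^[(m : ℕ)] a) (h _) ((m' : ℕ) - (m : ℕ)) (by omega) ?_
    rw [← Function.iterate_add_apply]
    have hs : (m' : ℕ) - (m : ℕ) + (m : ℕ) = (m' : ℕ) := by omega
    rw [hs, heq]
  · have hlt : (m' : ℕ) < (m : ℕ) := by omega
    refine hnc ((mttTau tgt r F)^[(m' : ℕ)] a) (h _) ((m : ℕ) - (m' : ℕ)) (by omega) ?_
    rw [← Function.iterate_add_apply]
    have hs : (m : ℕ) - (m' : ℕ) + (m' : ℕ) = (m : ℕ) := by omega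
    rw [hs, ← heq]

lemma mtt_rel_iff (src tgt : Fin q → Fin p) (r : Fin p) (F : {i : Fin p // i ≠ r} → Fin q)
    (hF : ∀ a, src (F a) = (a : Fin p)) (a b : Fin p) :
    (∃ k ∈ Finset.image F Finset.univ, src k = a ∧ tgt k = b) ↔
      ∃ _ : a ≠ r, b = mttTau tgt r F a := by
  constructor
  · rintro ⟨k, hk, hsrc, htgt⟩
    obtain ⟨j, -, rfl⟩ := Finset.mem_image.1 hk
    have haj : a = (j : Fin p) := by rw [← hsrc, hF]
    have ha : a ≠ r := by rw [haj]; exact j.2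
    refine ⟨ha, ?_⟩
    rw [mttTau_ne tgt r F ha]
    have hj : (⟨a, ha⟩ : {i : Fin p // i ≠ r}) = j := Subtype.ext haj
    rw [hj, htgt]
  · rintro ⟨ha, rfl⟩
    exact ⟨F ⟨a, ha⟩, Finset.mem_image_of_mem _ (Finset.mem_univ _), hF _,
      (mttTau_ne tgt r F ha).symm⟩

lemma mtt_cyc (src tgt : Fin q → Fin p) (r : Fin p) (F : {i : Fin p // i ≠ r} → Fin q)
    (hF : ∀ a, src (F a) = (a : Fin p)) {i : Fin p}
    (h : Relation.TransGen
      (fun a b => ∃ k ∈ Finset.image F Finset.univ, src k = a ∧ tgt k = b) i i) :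
    ∃ i', i' ≠ r ∧ ∃ n, 0 < n ∧ (mttTau tgt r F)^[n] i' = i' := by
  have key : ∀ b : Fin p, Relation.TransGen
      (fun a b => ∃ k ∈ Finset.image F Finset.univ, src k = a ∧ tgt k = b) i b →
      i ≠ r ∧ ∃ n, 0 < n ∧ (mttTau tgt r F)^[n] i = b := by
    intro b hab
    induction hab with
    | single h1 =>
        obtain ⟨ha, hb⟩ := (mtt_rel_iff src tgt r F hF _ _).1 h1
        exact ⟨ha, 1, one_pos, by rw [Function.iterate_one, ← hb]⟩
    | tail h1 h2 ih =>
        obtain ⟨ha, n, hn, hτ⟩ := ih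
        obtain ⟨hb, hc⟩ := (mtt_rel_iff src tgt r F hF _ _).1 h2
        exact ⟨ha, n + 1, by omega, by
          rw [Function.iterate_succ_apply', hτ, ← hc]⟩
  obtain ⟨ha, n, hn, hτ⟩ := key i h
  exact ⟨i, ha, n, hn, hτ⟩

lemma mtt_transGen (src tgt : Fin q → Fin p) (r : Fin p) (F : {i : Fin p // i ≠ r} → Fin q)
    (hF : ∀ a, src (F a) = (a : Fin p)) {i : Fin p} (hi : i ≠ r)
    {n : ℕ} (hn : 0 < n) (hcyc : (mttTau tgt r F)^[n] i = i) :
    Relation.TransGen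
      (fun a b => ∃ k ∈ Finset.image F Finset.univ, src k = a ∧ tgt k = b) i i := by
  set τ := mttTau tgt r F with hτ
  have hstep : ∀ m : ℕ, Relation.TransGen
      (fun a b => ∃ k ∈ Finset.image F Finset.univ, src k = a ∧ tgt k = b) i (τ^[m + 1] i) := by
    intro m
    induction m with
    | zero =>
        refine Relation.TransGen.single ((mtt_rel_iff src tgt r F hF _ _).2 ⟨hi, ?_⟩)
        rw [Function.iterate_one]
    | succ m' ih =>
        refine ih.tail ((mtt_rel_iff src tgt r F hF _ _).2
          ⟨mtt_iter_ne_r hi hn hcyc (m' + 1), ?_⟩)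
        rw [Function.iterate_succ_apply' τ (m' + 1) i]
  have := hstep (n - 1)
  have hs : n - 1 + 1 = n := by omega
  rwa [hs, hcyc] at this




lemma mtt_intree_iff (src tgt : Fin q → Fin p) (r : Fin p) (F : {i : Fin p // i ≠ r} → Fin q)
    (hF : ∀ a, src (F a) = (a : Fin p)) :
    IsInTree src tgt r (Finset.image F Finset.univ) ↔
      ∀ i, ¬ Relation.TransGen
        (fun a b => ∃ k ∈ Finset.image F Finset.univ, src k = a ∧ tgt k = b) i i := by
  constructor
  · exact fun h => h.2.2
  · intro h
    refine ⟨?_, ?_, h⟩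
    · intro i hi
      refine ⟨F ⟨i, hi⟩, ⟨Finset.mem_image_of_mem _ (Finset.mem_univ _), hF _⟩, ?_⟩
      rintro k ⟨hk, hsrc⟩
      obtain ⟨j, -, rfl⟩ := Finset.mem_image.1 hk
      have hj : j = ⟨i, hi⟩ := Subtype.ext (show (j : Fin p) = i by rw [← hsrc, hF])
      rw [hj]
    · intro k hk
      obtain ⟨j, -, rfl⟩ := Finset.mem_image.1 hk
      rw [hF]
      exact j.2

/-- **Tutte's matrix tree theorem, incoming version.** The number of incoming directed
spanning trees of `G` rooted at `v_r` equals `det (L₂^r)`, where `L₂^r` is obtained from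
the Laplacian `L₂ = D_out - A_vᵀ` by deleting the `r`-th row and column. -/
theorem tutte_incoming (p q : ℕ) (src tgt : Fin q → Fin p)
    (hloop : ∀ k, src k ≠ tgt k)
    (hsimple : Function.Injective fun k => (src k, tgt k))
    (r : Fin p) :
    (Nat.card {S : Finset (Fin q) // IsInTree src tgt r S} : ℝ) =
      ((Dout src - (Av src tgt)ᵀ).submatrix
        (fun i : {i : Fin p // i ≠ r} => i.val)
        (fun i : {i : Fin p // i ≠ r} => i.val)).det := by
  classical
  set E : {i : Fin p // i ≠ r} → Finset (Fin q) :=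
    fun a => Finset.univ.filter (fun k => src k = (a : Fin p)) with hE
  -- Step 1: express the reduced Laplacian as a transpose of a row-sum matrix
  have hmat : ((Dout src - (Av src tgt)ᵀ).submatrix
      (fun i : {i : Fin p // i ≠ r} => i.val) (fun i : {i : Fin p // i ≠ r} => i.val)) =
      (Matrix.of fun (a j : {i : Fin p // i ≠ r}) =>
        ∑ k ∈ E a, ((if (j : Fin p) = src k then (1:ℝ) else 0) -
          (if (j : Fin p) = tgt k then (1:ℝ) else 0)))ᵀ := by
    ext i j
    simp only [Matrix.submatrix_apply, Matrix.sub_apply, Matrix.transpose_apply, Dout, Av,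
      Matrix.diagonal_apply, Matrix.of_apply]
    rw [Finset.sum_sub_distrib]
    have h1 : (∑ k ∈ E j, if (i : Fin p) = src k then (1:ℝ) else 0)
        = if (i : Fin p) = (j : Fin p) then (Fintype.card {k : Fin q // src k = (i : Fin p)} : ℝ)
          else 0 := by
      have hc : ∀ k ∈ E j, (if (i : Fin p) = src k then (1:ℝ) else 0)
          = (if (i : Fin p) = (j : Fin p) then (1:ℝ) else 0) := by
        intro k hk
        have hsk : src k = (j : Fin p) := (Finset.mem_filter.1 hk).2
        rw [hsk]
      rw [Finset.sum_congr rfl hc, Finset.sum_const, nsmul_eq_mul, mul_ite, mul_one, mul_zero]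
      by_cases hij : (i : Fin p) = (j : Fin p)
      · rw [if_pos hij, if_pos hij, Fintype.card_subtype, hij]
      · rw [if_neg hij, if_neg hij]
    have h2 : (∑ k ∈ E j, if (i : Fin p) = tgt k then (1:ℝ) else 0)
        = if ∃ k, src k = (j : Fin p) ∧ tgt k = (i : Fin p) then (1:ℝ) else 0 := by
      by_cases hex : ∃ k, src k = (j : Fin p) ∧ tgt k = (i : Fin p)
      · obtain ⟨k₀, hk₀s, hk₀t⟩ := hex
        rw [if_pos ⟨k₀, hk₀s, hk₀t⟩]
        rw [Finset.sum_eq_single k₀]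
        · rw [if_pos hk₀t.symm]
        · intro k hk hne
          rw [if_neg]
          intro h
          apply hne
          apply hsimple
          show (src k, tgt k) = (src k₀, tgt k₀)
          rw [(Finset.mem_filter.1 hk).2, hk₀s, ← h, hk₀t]
        · intro hk₀
          exact absurd (show k₀ ∈ E j from Finset.mem_filter.2 ⟨Finset.mem_univ _, hk₀s⟩) hk₀
      · rw [if_neg hex]
        apply Finset.sum_eq_zero
        intro k hk
        rw [if_neg]
        intro h
        exact hex ⟨k, (Finset.mem_filter.1 hk).2, h.symm⟩
    rw [h1, h2]
  -- Step 2: multilinear expansion of the determinant over edge choices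
  have hdet2 : (Matrix.of fun (a j : {i : Fin p // i ≠ r}) =>
        ∑ k ∈ E a, ((if (j : Fin p) = src k then (1:ℝ) else 0) -
          (if (j : Fin p) = tgt k then (1:ℝ) else 0))).det
      = ∑ G ∈ Fintype.piFinset E, (mttMat src tgt r G).det := by
    have hml := (Matrix.detRowAlternating :
        (({i : Fin p // i ≠ r}) → ℝ) [⋀^({i : Fin p // i ≠ r})]→ₗ[ℝ] ℝ).toMultilinearMap.map_sum_finset
      (fun (_ : {i : Fin p // i ≠ r}) (k : Fin q) => fun j : {i : Fin p // i ≠ r} =>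
        (if (j : Fin p) = src k then (1:ℝ) else 0) - (if (j : Fin p) = tgt k then (1:ℝ) else 0)) E
    have hfun : (Matrix.of fun (a j : {i : Fin p // i ≠ r}) =>
        ∑ k ∈ E a, ((if (j : Fin p) = src k then (1:ℝ) else 0) -
          (if (j : Fin p) = tgt k then (1:ℝ) else 0)))
        = fun a => ∑ k ∈ E a, fun j : {i : Fin p // i ≠ r} =>
            (if (j : Fin p) = src k then (1:ℝ) else 0) -
            (if (j : Fin p) = tgt k then (1:ℝ) else 0) := by
      funext a j
      rw [Matrix.of_apply]
      exact (Finset.sum_apply j (E a) (fun k => fun j' : {i : Fin p // i ≠ r} =>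
        (if (j' : Fin p) = src k then (1:ℝ) else 0) -
        (if (j' : Fin p) = tgt k then (1:ℝ) else 0))).symm
    rw [hfun]
    exact hml
  -- Step 3: each term is the indicator of being an in-tree
  have hterm : ∀ G ∈ Fintype.piFinset E, (mttMat src tgt r G).det =
      if IsInTree src tgt r (Finset.image G Finset.univ) then (1:ℝ) else 0 := by
    intro G hG
    have hFh : ∀ a, src (G a) = (a : Fin p) := fun a =>
      (Finset.mem_filter.1 (Fintype.mem_piFinset.1 hG a)).2
    by_cases h : IsInTree src tgt r (Finset.image G Finset.univ)
    · rw [if_pos h]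
      refine mttMat_det_one src tgt r G hFh hloop (mtt_reach tgt r G ?_)
      intro i hi n hn hcyc
      exact (mtt_intree_iff src tgt r G hFh).1 h i (mtt_transGen src tgt r G hFh hi hn hcyc)
    · rw [if_neg h]
      have hex : ∃ i, Relation.TransGen
          (fun a b => ∃ k ∈ Finset.image G Finset.univ, src k = a ∧ tgt k = b) i i := by
        by_contra hno
        push_neg at hno
        exact h ((mtt_intree_iff src tgt r G hFh).2 hno)
      obtain ⟨i, hTG⟩ := hex
      obtain ⟨i', hi', n, hn, hcyc⟩ := mtt_cyc src tgt r G hFh hTG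
      exact mttMat_det_zero src tgt r G hFh hi' hn hcyc
  -- Step 4: assemble and count
  rw [hmat, Matrix.det_transpose, hdet2, Finset.sum_congr rfl hterm, Finset.sum_boole]
  norm_cast
  rw [Nat.card_eq_fintype_card, Fintype.card_subtype]
  symm
  refine Finset.card_bij (fun G _ => Finset.image G Finset.univ) ?_ ?_ ?_
  · intro G hG
    exact Finset.mem_filter.2 ⟨Finset.mem_univ _, (Finset.mem_filter.1 hG).2⟩
  · intro G hG G' hG' himg
    have hFG : ∀ a, src (G a) = (a : Fin p) := fun a =>
      (Finset.mem_filter.1 (Fintype.mem_piFinset.1 (Finset.mem_filter.1 hG).1 a)).2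
    have hFG' : ∀ a, src (G' a) = (a : Fin p) := fun a =>
      (Finset.mem_filter.1 (Fintype.mem_piFinset.1 (Finset.mem_filter.1 hG').1 a)).2
    have himg2 : Finset.image G Finset.univ = Finset.image G' Finset.univ := himg
    funext a
    have hmem : G a ∈ Finset.image G' Finset.univ := by
      rw [← himg2]
      exact Finset.mem_image_of_mem _ (Finset.mem_univ _)
    obtain ⟨b, -, hb⟩ := Finset.mem_image.1 hmem
    have hab : b = a := Subtype.ext (by rw [← hFG' b, hb, hFG a])
    rw [← hb, hab]
  · intro S hS
    have hT : IsInTree src tgt r S := (Finset.mem_filter.1 hS).2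
    set G : (∀ _ : {i : Fin p // i ≠ r}, Fin q) :=
      fun a => (hT.1 (a : Fin p) a.2).exists.choose with hGdef
    have hGspec : ∀ a : {i : Fin p // i ≠ r}, G a ∈ S ∧ src (G a) = (a : Fin p) :=
      fun a => (hT.1 (a : Fin p) a.2).exists.choose_spec
    have himg : Finset.image G Finset.univ = S := by
      apply Finset.Subset.antisymm
      · intro k hk
        obtain ⟨a, -, rfl⟩ := Finset.mem_image.1 hk
        exact (hGspec a).1
      · intro k hk
        have hsr : src k ≠ r := hT.2.1 k hk
        have hku : k = G ⟨src k, hsr⟩ :=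
          (hT.1 (src k) hsr).unique ⟨hk, rfl⟩ (hGspec ⟨src k, hsr⟩)
        rw [hku]
        exact Finset.mem_image_of_mem _ (Finset.mem_univ _)
    refine ⟨G, ?_, himg⟩
    refine Finset.mem_filter.2 ⟨Fintype.mem_piFinset.2
      (fun a => Finset.mem_filter.2 ⟨Finset.mem_univ _, (hGspec a).2⟩), ?_⟩
    rw [himg]
    exact hT
end

section
/- Let G be a finite directed graph and define the p-vector x by x_i = number of outgoing directed spanning trees of G rooted at v_i. Then L_1 x = 0, where L_1 = D_in - A_v is the Laplacian. -/
open Matrix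

variable {p q : ℕ}

/-! Fix a vertex `i` and consider the spanning subgraphs in which every vertex has in-degree one
and is reachable from `i` (`IsUnicyclicAt`); their unique cycle passes through `i`. Deleting the
cycle edge that enters `i` leaves an out-tree rooted at `i`, so there are `indeg i * t i` of them;
deleting instead the cycle edge `i → j` that leaves `i` leaves an out-tree rooted at `j`, so there
are `∑_{i → j} t j` of them. With at most one edge per ordered pair this sum is `(A_v t) i`. -/

open Relation Finset

variable {src tgt : Fin q → Fin p}

def edgeRel (src tgt : Fin q → Fin p) (S : Finset (Fin q)) (a b : Fin p) : Prop :=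
  ∃ k ∈ S, src k = a ∧ tgt k = b

lemma edgeRel_of_mem {S : Finset (Fin q)} {k : Fin q} (hk : k ∈ S) :
    edgeRel src tgt S (src k) (tgt k) :=
  ⟨k, hk, rfl, rfl⟩

lemma edgeRel_mono {S T : Finset (Fin q)} (h : S ⊆ T) : edgeRel src tgt S ≤ edgeRel src tgt T :=
  fun _ _ ⟨k, hk, hs, ht⟩ => ⟨k, h hk, hs, ht⟩

def InDegreeOne (tgt : Fin q → Fin p) (U : Finset (Fin q)) : Prop :=
  ∀ v, ∃! k, k ∈ U ∧ tgt k = v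

def IsUnicyclicAt (src tgt : Fin q → Fin p) (i : Fin p) (U : Finset (Fin q)) : Prop :=
  InDegreeOne tgt U ∧ ∀ v, ReflTransGen (edgeRel src tgt U) i v

namespace IsOutTree

variable {r : Fin p} {T : Finset (Fin q)}

lemma notMem_of_tgt_eq (hT : IsOutTree src tgt r T) {k : Fin q} (hk : tgt k = r) : k ∉ T :=
  fun h => hT.2.1 k h hk

lemma reflTransGen_root (hT : IsOutTree src tgt r T) (v : Fin p) :
    ReflTransGen (edgeRel src tgt T) r v := by
  have : Std.Irrefl (TransGen (edgeRel src tgt T)) := ⟨hT.2.2⟩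
  have hwf := Finite.wellFounded_of_trans_of_irrefl (TransGen (edgeRel src tgt T))
  induction v using hwf.induction with
  | _ v ih =>
    by_cases hv : v = r
    · exact hv ▸ .refl
    · obtain ⟨k, ⟨hk, rfl⟩, -⟩ := hT.1 v hv
      exact (ih (src k) (.single (edgeRel_of_mem hk))).tail (edgeRel_of_mem hk)

lemma inDegreeOne_insert {e : Fin q} (hT : IsOutTree src tgt (tgt e) T) :
    InDegreeOne tgt (insert e T) := by
  intro v
  by_cases hv : v = tgt e
  · subst hv
    refine ⟨e, ⟨mem_insert_self _ _, rfl⟩, fun k ⟨hk, hkt⟩ => ?_⟩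
    exact (mem_insert.mp hk).resolve_right fun h => hT.2.1 k h hkt
  · obtain ⟨k, ⟨hk, hkt⟩, huniq⟩ := hT.1 v hv
    refine ⟨k, ⟨mem_insert_of_mem hk, hkt⟩, fun k' ⟨hk', hkt'⟩ => ?_⟩
    rcases mem_insert.mp hk' with rfl | h
    · exact absurd hkt'.symm hv
    · exact huniq k' ⟨h, hkt'⟩

lemma isUnicyclicAt_insert_of_tgt {i : Fin p} {e : Fin q} (hT : IsOutTree src tgt i T)
    (he : tgt e = i) : IsUnicyclicAt src tgt i (insert e T) := by
  subst he
  exact ⟨hT.inDegreeOne_insert,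
    fun v => ReflTransGen.mono (edgeRel_mono (subset_insert e T)) _ _ (hT.reflTransGen_root v)⟩

lemma isUnicyclicAt_insert_of_src {i : Fin p} {f : Fin q} (hT : IsOutTree src tgt (tgt f) T)
    (hf : src f = i) : IsUnicyclicAt src tgt i (insert f T) := by
  subst hf
  exact ⟨hT.inDegreeOne_insert, fun v => .head (edgeRel_of_mem (mem_insert_self f T))
    (ReflTransGen.mono (edgeRel_mono (subset_insert f T)) _ _ (hT.reflTransGen_root v))⟩

end IsOutTree

namespace InDegreeOne

variable {U : Finset (Fin q)}

lemma eq_of_tgt_eq (hU : InDegreeOne tgt U) {k k' : Fin q} (hk : k ∈ U) (hk' : k' ∈ U)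
    (h : tgt k = tgt k') : k = k' :=
  (hU (tgt k')).unique ⟨hk, h⟩ ⟨hk', rfl⟩

noncomputable def parent (src : Fin q → Fin p) (hU : InDegreeOne tgt U) (v : Fin p) : Fin p :=
  src (hU v).exists.choose

lemma src_eq_parent (hU : InDegreeOne tgt U) {k : Fin q} (hk : k ∈ U) :
    src k = hU.parent src (tgt k) := by
  have := (hU (tgt k)).exists.choose_spec
  exact congrArg src (hU.eq_of_tgt_eq hk this.1 this.2.symm)

lemma exists_iterate_parent (hU : InDegreeOne tgt U) {a b : Fin p}
    (h : ReflTransGen (edgeRel src tgt U) a b) : ∃ n, (hU.parent src)^[n] b = a := by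
  induction h with
  | refl => exact ⟨0, rfl⟩
  | tail _ hbc ih =>
    obtain ⟨k, hk, rfl, rfl⟩ := hbc
    obtain ⟨n, hn⟩ := ih
    exact ⟨n + 1, by rw [Function.iterate_succ_apply, ← hU.src_eq_parent hk, hn]⟩

/-- At most one edge leaving a vertex lies on a cycle: both targets are iterated parents of the
vertex, and the vertex is a periodic point of `parent`. -/
lemma eq_of_src_eq (hU : InDegreeOne tgt U) {f g : Fin q} (hf : f ∈ U) (hg : g ∈ U)
    (hfg : src f = src g) (hf' : ReflTransGen (edgeRel src tgt U) (tgt f) (src f))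
    (hg' : ReflTransGen (edgeRel src tgt U) (tgt g) (src g)) : f = g := by
  obtain ⟨a, ha⟩ := hU.exists_iterate_parent hf'
  obtain ⟨b, hb⟩ := hU.exists_iterate_parent hg'
  have hpa : (hU.parent src)^[a + 1] (src f) = src f := by
    rw [Function.iterate_succ_apply', ha, ← hU.src_eq_parent hf]
  have hpb : (hU.parent src)^[b + 1] (src f) = src f := by
    rw [Function.iterate_succ_apply', hfg, hb, ← hU.src_eq_parent hg]
  refine hU.eq_of_tgt_eq hf hg ?_
  calc tgt f = (hU.parent src)^[a] ((hU.parent src)^[b + 1] (src f)) := by rw [hpb, ha]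
    _ = (hU.parent src)^[b] ((hU.parent src)^[a + 1] (src f)) := by
      rw [← Function.iterate_add_apply, ← Function.iterate_add_apply, Nat.add_left_comm]
    _ = tgt g := by rw [hpa, hfg, hb]

lemma mem_of_transGen_self (hU : InDegreeOne tgt U) {S : Finset (Fin q)} (hS : S ⊆ U)
    {k : Fin q} (hk : k ∈ U) (h : TransGen (edgeRel src tgt S) (tgt k) (tgt k)) : k ∈ S := by
  obtain ⟨-, -, ⟨k', hk', -, hkt'⟩⟩ := TransGen.tail'_iff.mp h
  exact hU.eq_of_tgt_eq (hS hk') hk hkt' ▸ hk'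

/-- The `U`-edge into a vertex on an `S`-cycle is the last edge of that cycle. -/
lemma transGen_self_of_reflTransGen (hU : InDegreeOne tgt U) {S : Finset (Fin q)} (hS : S ⊆ U)
    {w v : Fin p} (hwv : ReflTransGen (edgeRel src tgt U) w v)
    (hv : TransGen (edgeRel src tgt S) v v) : TransGen (edgeRel src tgt S) w w := by
  induction hwv using ReflTransGen.head_induction_on with
  | refl => exact hv
  | head hab _ ih =>
    obtain ⟨k, hk, rfl, rfl⟩ := hab
    obtain ⟨c, hkc, k', hk', rfl, hkt'⟩ := TransGen.tail'_iff.mp ih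
    obtain rfl := hU.eq_of_tgt_eq (hS hk') hk hkt'
    exact .head' (edgeRel_of_mem hk') hkc

end InDegreeOne

namespace IsUnicyclicAt

variable {i : Fin p} {U : Finset (Fin q)}

/-- A cycle of `U.erase e` would extend back through `i` to `tgt e`, so it would contain `e`. -/
lemma isOutTree_erase (hU : IsUnicyclicAt src tgt i U) {e : Fin q} (he : e ∈ U)
    (hei : ReflTransGen (edgeRel src tgt U) (tgt e) i) :
    IsOutTree src tgt (tgt e) (U.erase e) := by
  obtain ⟨hdeg, hreach⟩ := hU
  refine ⟨fun v hv => ?_, fun k hk hkt => ?_, fun v hv => ?_⟩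
  · obtain ⟨k, ⟨hk, rfl⟩, huniq⟩ := hdeg v
    refine ⟨k, ⟨mem_erase.mpr ⟨fun h => hv (h ▸ rfl), hk⟩, rfl⟩, fun k' ⟨hk', hkt'⟩ => ?_⟩
    exact huniq k' ⟨mem_of_mem_erase hk', hkt'⟩
  · exact (mem_erase.mp hk).1 (hdeg.eq_of_tgt_eq (mem_of_mem_erase hk) he hkt)
  · have hcyc := hdeg.transGen_self_of_reflTransGen (erase_subset e U) (hei.trans (hreach v)) hv
    exact (mem_erase.mp (hdeg.mem_of_transGen_self (erase_subset e U) he hcyc)).1 rfl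

lemma exists_mem_src_eq (hU : IsUnicyclicAt src tgt i U) :
    ∃ f ∈ U, src f = i ∧ ReflTransGen (edgeRel src tgt U) (tgt f) i := by
  obtain ⟨e, ⟨he, hei⟩, -⟩ := hU.1 i
  have hcyc : TransGen (edgeRel src tgt U) i i := .tail' (hU.2 (src e)) ⟨e, he, rfl, hei⟩
  obtain ⟨c, ⟨f, hf, hfi, rfl⟩, hci⟩ := TransGen.head'_iff.mp hcyc
  exact ⟨f, hf, hfi, hci⟩

end IsUnicyclicAt

lemma card_inEdges_mul_card_outTrees (i : Fin p) :
    Nat.card {e // tgt e = i} * Nat.card {T // IsOutTree src tgt i T} =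
      Nat.card {U // IsUnicyclicAt src tgt i U} := by
  rw [← Nat.card_prod]
  refine Nat.card_eq_of_bijective
    (fun x => ⟨insert x.1.1 x.2.1, x.2.2.isUnicyclicAt_insert_of_tgt x.1.2⟩) ⟨?_, ?_⟩
  · rintro ⟨⟨e, he⟩, T, hT⟩ ⟨⟨e', he'⟩, T', hT'⟩ h
    have hU : insert e T = insert e' T' := congrArg Subtype.val h
    obtain rfl : e = e' := (hT'.isUnicyclicAt_insert_of_tgt he').1.eq_of_tgt_eq
      (hU ▸ mem_insert_self e T) (mem_insert_self e' T') (he.trans he'.symm)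
    obtain rfl : T = T' := by
      rw [← erase_insert (hT.notMem_of_tgt_eq he), hU, erase_insert (hT'.notMem_of_tgt_eq he)]
    rfl
  · rintro ⟨U, hU⟩
    obtain ⟨e, ⟨he, hei⟩, -⟩ := hU.1 i
    have hT : IsOutTree src tgt i (U.erase e) := hei ▸ hU.isOutTree_erase he (hei ▸ .refl)
    exact ⟨⟨⟨e, hei⟩, U.erase e, hT⟩, Subtype.ext (insert_erase he)⟩

lemma card_sigma_outTrees (i : Fin p) :
    Nat.card (Σ f : {f // src f = i}, {T // IsOutTree src tgt (tgt f.1) T}) =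
      Nat.card {U // IsUnicyclicAt src tgt i U} := by
  refine Nat.card_eq_of_bijective
    (fun x => ⟨insert x.1.1 x.2.1, x.2.2.isUnicyclicAt_insert_of_src x.1.2⟩) ⟨?_, ?_⟩
  · rintro ⟨⟨f, hf⟩, T, hT⟩ ⟨⟨g, hg⟩, T', hT'⟩ h
    have hU : insert f T = insert g T' := congrArg Subtype.val h
    have hback {f : Fin q} {T : Finset (Fin q)} (hT : IsOutTree src tgt (tgt f) T) :
        ReflTransGen (edgeRel src tgt (insert f T)) (tgt f) (src f) :=
      ReflTransGen.mono (edgeRel_mono (subset_insert f T)) _ _ (hT.reflTransGen_root _)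
    obtain rfl : f = g := (hT'.isUnicyclicAt_insert_of_src hg).1.eq_of_src_eq
      (hU ▸ mem_insert_self f T) (mem_insert_self g T') (hf.trans hg.symm) (hU ▸ hback hT)
      (hback hT')
    obtain rfl : T = T' := by
      rw [← erase_insert (hT.notMem_of_tgt_eq rfl), hU, erase_insert (hT'.notMem_of_tgt_eq rfl)]
    rfl
  · rintro ⟨U, hU⟩
    obtain ⟨f, hf, hfi, hfr⟩ := hU.exists_mem_src_eq
    exact ⟨⟨⟨f, hfi⟩, U.erase f, hU.isOutTree_erase hf hfr⟩, Subtype.ext (insert_erase hf)⟩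

lemma card_inEdges_mul_card_outTrees_eq_sum (i : Fin p) :
    Fintype.card {e // tgt e = i} * Nat.card {T // IsOutTree src tgt i T} =
      ∑ f with src f = i, Nat.card {T // IsOutTree src tgt (tgt f) T} := by
  rw [← Nat.card_eq_fintype_card, card_inEdges_mul_card_outTrees, ← card_sigma_outTrees,
    Nat.card_sigma]
  exact (sum_subtype _ (fun _ => mem_filter_univ _)
    fun f => Nat.card {T // IsOutTree src tgt (tgt f) T}).symm

lemma Av_mulVec_apply (hsimple : Function.Injective fun k => (src k, tgt k)) (x : Fin p → ℝ)
    (i : Fin p) : (Av src tgt *ᵥ x) i = ∑ k with src k = i, x (tgt k) := by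
  rw [← sum_image fun k hk k' hk' h =>
    hsimple (Prod.ext ((mem_filter.1 hk).2.trans (mem_filter.1 hk').2.symm) h)]
  simp only [mulVec, dotProduct, Av, of_apply, ite_mul, one_mul, zero_mul]
  rw [← sum_filter]
  congr 1
  ext j
  simp

theorem laplacian1_mulVec_tree_counts_general (p q : ℕ) (src tgt : Fin q → Fin p)
    (hsimple : Function.Injective fun k => (src k, tgt k)) :
    (Din tgt - Av src tgt) *ᵥ
      (fun i => (Nat.card {S : Finset (Fin q) // IsOutTree src tgt i S} : ℝ)) = 0 := by
  funext i
  rw [sub_mulVec, Pi.sub_apply, Din, mulVec_diagonal, Av_mulVec_apply hsimple, Pi.zero_apply,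
    sub_eq_zero]
  exact_mod_cast card_inEdges_mul_card_outTrees_eq_sum i

/-- The vector `x` of numbers of outgoing directed spanning trees rooted at each vertex
satisfies `L₁ x = 0`, where `L₁ = D_in - A_v`. -/
theorem laplacian1_mulVec_tree_counts (p q : ℕ) (src tgt : Fin q → Fin p)
    (hloop : ∀ k, src k ≠ tgt k)
    (hsimple : Function.Injective fun k => (src k, tgt k)) :
    (Din tgt - Av src tgt) *ᵥ
      (fun i => (Nat.card {S : Finset (Fin q) // IsOutTree src tgt i S} : ℝ)) = 0 :=
  laplacian1_mulVec_tree_counts_general p q src tgt hsimple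
end

section
/- (Weighted matrix tree theorem) Let G_w be a finite directed graph with positive edge weights w_1,...,w_q, weighted Laplacian L_{1,w} = D_{in,w} - A_{v,w}, and a fixed root vertex v_r. Then det(L_{1,w}^r), where L_{1,w}^r deletes the r-th row and column, equals the sum over all outgoing directed spanning trees T rooted at v_r of the product of the weights of the edges of T. -/
open Matrix

variable {p q : ℕ}

/-- Weighted vertex-adjacency matrix: `[A_{v,w}]_{ij} = w_k` if `e_k` goes from `i` to `j`. -/
def Avw (src tgt : Fin q → Fin p) (w : Fin q → ℝ) : Matrix (Fin p) (Fin p) ℝ :=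
  Matrix.of fun i j => ∑ k, if src k = i ∧ tgt k = j then w k else 0

/-- Weighted diagonal in-degree matrix: sum of the weights of the edges into each vertex. -/
def Dinw (tgt : Fin q → Fin p) (w : Fin q → ℝ) : Matrix (Fin p) (Fin p) ℝ :=
  Matrix.diagonal fun i => ∑ k, if tgt k = i then w k else 0

/-- Weighted diagonal out-degree matrix: sum of the weights of the edges out of each vertex. -/
def Doutw (src : Fin q → Fin p) (w : Fin q → ℝ) : Matrix (Fin p) (Fin p) ℝ :=
  Matrix.diagonal fun i => ∑ k, if src k = i then w k else 0

/-! In the transposed reduced Laplacian, the row of each non-root vertex `j` is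
`∑_{k : tgt k = j} w k (e_j - e_{src k})`. By multilinearity the determinant
becomes a sum over the ways `f` of choosing one incoming edge for every non-root vertex, the term of
`f` being `∏ w (f j)` times `det (1 - P)`, where `P` is the matrix of the "parent" map
`j ↦ src (f j)`. This determinant is `1` when the parent map has no cycle, because `1 - P` is then
block triangular with identity diagonal blocks, and `0` otherwise, because the indicator of the
vertices leading into a cycle is a null vector. The acyclic choices `f` are exactly the in-edge
maps of the outgoing spanning trees rooted at `r`. -/

open Finset

namespace Matrix

variable {n R : Type*} [Fintype n] [DecidableEq n] [CommRing R]

theorem det_one_sub_eq_one_of_acyclic {P : Matrix n n R} {Q : n → n → Prop}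
    (hPQ : ∀ i j, P i j ≠ 0 → Q i j) (hQ : ∀ a, ¬ Relation.TransGen Q a a) :
    (1 - P).det = 1 := by
  classical
  let ρ : n → ℕ := fun a => #{b | Relation.TransGen Q b a}
  have hρ : ∀ a b, Q a b → ρ a < ρ b := by
    intro a b hab
    refine card_lt_card ⟨fun c hc => ?_, fun hsub => hQ a ?_⟩
    · simp only [mem_filter, mem_univ, true_and] at hc ⊢
      exact hc.tail hab
    · simpa using hsub (by simpa using Relation.TransGen.single hab)
  have hP : ∀ i j, ρ j ≤ ρ i → P i j = 0 := fun i j h =>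
    not_not.1 fun hne => (hρ i j (hPQ i j hne)).not_ge h
  have htri : (1 - P).BlockTriangular ρ := fun i j hji => by
    rw [sub_apply, one_apply_ne (by rintro rfl; exact hji.false), hP i j hji.le, sub_zero]
  have hblock : ∀ a, (1 - P).toSquareBlock ρ a = 1 := by
    intro a
    ext x y
    rw [toSquareBlock_def, of_apply, sub_apply, hP _ _ (x.2.trans y.2.symm).ge, sub_zero,
      one_apply, one_apply]
    exact if_congr Subtype.ext_iff.symm rfl rfl
  rw [htri.det]
  exact prod_eq_one fun a _ => by rw [hblock, det_one]

theorem det_one_sub_eq_zero_of_transGen {Q : n → n → Prop} [DecidableRel Q]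
    (hQ : Relator.RightUnique Q) {a : n} (ha : Relation.TransGen Q a a) :
    (1 - of fun i j => if Q i j then (1 : R) else 0).det = 0 := by
  classical
  set M : Matrix n n R := 1 - of fun i j => if Q i j then 1 else 0
  let v : n → R := fun i => if Relation.TransGen Q i a then 1 else 0
  have hv : M *ᵥ v = 0 := by
    funext i
    rw [sub_mulVec, one_mulVec, Pi.sub_apply, Pi.zero_apply, sub_eq_zero]
    by_cases hi : ∃ j, Q i j
    · obtain ⟨j, hij⟩ := hi
      -- `a` lies on a cycle, so `i` reaches `a` exactly when its unique successor `j` does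
      have hreach : Relation.TransGen Q i a ↔ Relation.TransGen Q j a := by
        refine ⟨fun h => ?_, fun h => .head hij h⟩
        obtain ⟨c, hic, hca⟩ := Relation.TransGen.head'_iff.mp h
        obtain rfl := hQ hij hic
        rcases Relation.reflTransGen_iff_eq_or_transGen.mp hca with rfl | hja
        exacts [ha, hja]
      rw [mulVec, dotProduct, sum_eq_single j (fun c _ hcj => by
        simp [show ¬ Q i c from fun hic => hcj (hQ hic hij)]) (by simp)]
      simp [v, hij, hreach]
    · push Not at hi
      have hia : ¬ Relation.TransGen Q i a := fun h =>
        let ⟨c, hic, _⟩ := Relation.TransGen.head'_iff.mp h; hi c hic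
      simp [v, mulVec, dotProduct, hi, hia]
  have hdet : M.det • v = 0 := by
    rw [← one_mulVec v, ← smul_mulVec, ← adjugate_mul, ← mulVec_mulVec, hv, mulVec_zero]
  simpa [v, ha] using congrFun hdet a

open scoped Classical in
theorem det_one_sub_of_rightUnique {Q : n → n → Prop} [DecidableRel Q]
    (hQ : Relator.RightUnique Q) :
    (1 - of fun i j => if Q i j then (1 : R) else 0).det =
      if ∀ a, ¬ Relation.TransGen Q a a then 1 else 0 := by
  split_ifs with h
  · exact det_one_sub_eq_one_of_acyclic (fun i j hij => by_contra fun hQij => hij (if_neg hQij)) h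
  · push Not at h
    obtain ⟨a, ha⟩ := h
    exact det_one_sub_eq_zero_of_transGen hQ ha

end Matrix

theorem Relation.TransGen.subtype {α : Type*} {r : α → α → Prop} {P : α → Prop}
    (hr : ∀ a b, r a b → P b) {a b : α} (h : Relation.TransGen r a b) (ha : P a) (hb : P b) :
    Relation.TransGen (fun x y : Subtype P => r x y) ⟨a, ha⟩ ⟨b, hb⟩ := by
  induction h using Relation.TransGen.head_induction_on with
  | single hab => exact .single hab
  | head hac _ ih => exact .head hac (ih (hr _ _ hac))

section InEdgeChoices

variable (src tgt : Fin q → Fin p) (r : Fin p)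

def inEdgeChoices : Finset ({i // i ≠ r} → Fin q) :=
  Fintype.piFinset fun j => {k | tgt k = j}

variable {tgt r}

theorem mem_inEdgeChoices {f : {i // i ≠ r} → Fin q} :
    f ∈ inEdgeChoices tgt r ↔ ∀ j, tgt (f j) = j := by
  simp [inEdgeChoices]

def parentRel (f : {i // i ≠ r} → Fin q) (j i : {i // i ≠ r}) : Prop :=
  src (f j) = i

instance (f : {i // i ≠ r} → Fin q) : DecidableRel (parentRel src f) :=
  fun j i => inferInstanceAs (Decidable (src (f j) = i))

theorem parentRel_rightUnique (f : {i // i ≠ r} → Fin q) :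
    Relator.RightUnique (parentRel src f) :=
  fun _ _ _ hi hi' => Subtype.ext (hi.symm.trans hi')

variable (tgt r)

theorem det_reducedLaplacian_eq_sum_inEdgeChoices (w : Fin q → ℝ) :
    ((Dinw tgt w - Avw src tgt w).submatrix
        (fun i : {i : Fin p // i ≠ r} => i.val) (fun i => i.val)).det =
      ∑ f ∈ inEdgeChoices tgt r,
        (∏ j, w (f j)) * (1 - of fun j i => if parentRel src f j i then (1 : ℝ) else 0).det := by
  set E := fun j k (i : {i // i ≠ r}) =>
    w k * ((1 : Matrix {i // i ≠ r} {i // i ≠ r} ℝ) j i - if src k = i then 1 else 0)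
  have hrows : ((Dinw tgt w - Avw src tgt w).submatrix
        (fun i : {i : Fin p // i ≠ r} => i.val) (fun i => i.val))ᵀ =
      of fun j : {i // i ≠ r} => ∑ k ∈ {k | tgt k = j}, E j k := by
    ext j i
    simp only [E, transpose_apply, submatrix_apply, of_apply, Finset.sum_apply]
    rcases eq_or_ne i j with rfl | hij
    · simp [Dinw, Avw, mul_sub, sum_filter, ← ite_and, and_comm]
    · simp [Dinw, Avw, one_apply_ne hij.symm, Subtype.val_injective.ne hij, sum_filter,
        ← ite_and, and_comm]
  rw [← det_transpose, hrows]
  refine (detRowAlternating.toMultilinearMap.map_sum_finset E fun j => {k | tgt k = j}).trans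
    (sum_congr rfl fun f _ => ?_)
  rw [← det_mul_column]
  rfl

variable {tgt r}

theorem isOutTree_image_iff {f : {i // i ≠ r} → Fin q} (hf : f ∈ inEdgeChoices tgt r) :
    IsOutTree src tgt r (univ.image f) ↔ ∀ a, ¬ Relation.TransGen (parentRel src f) a a := by
  rw [mem_inEdgeChoices] at hf
  have hedge : ∀ a b, (∃ k ∈ univ.image f, src k = a ∧ tgt k = b) ↔
      ∃ j : {i // i ≠ r}, src (f j) = a ∧ ↑j = b := by
    simp [hf]
  have hparent : ∀ i j : {i // i ≠ r},
      (∃ k ∈ univ.image f, src k = i ∧ tgt k = j) ↔ parentRel src f j i := by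
    intro i j
    rw [hedge]
    exact ⟨fun ⟨j', h, hj'⟩ => Subtype.ext hj' ▸ h, fun h => ⟨j, h, rfl⟩⟩
  refine ⟨fun hS a ha => hS.2.2 a ?_, fun hacyc => ⟨fun i hi => ?_, fun k hk => ?_, fun x hx => ?_⟩⟩
  · exact (Relation.transGen_swap.2 ha).lift Subtype.val fun x y h => (hparent x y).2 h
  · refine ⟨f ⟨i, hi⟩, ⟨mem_image_of_mem f (mem_univ _), hf _⟩, fun k ⟨hk, hki⟩ => ?_⟩
    obtain ⟨j, -, rfl⟩ := mem_image.1 hk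
    rw [show j = ⟨i, hi⟩ from Subtype.ext ((hf j).symm.trans hki)]
  · obtain ⟨j, -, rfl⟩ := mem_image.1 hk
    exact hf j ▸ j.2
  · -- every edge of the image ends at a non-root vertex, so a cycle stays off the root
    have htgt : ∀ a b, (∃ k ∈ univ.image f, src k = a ∧ tgt k = b) → b ≠ r := fun a b h => by
      obtain ⟨j, -, rfl⟩ := (hedge a b).1 h
      exact j.2
    obtain ⟨c, -, hcx⟩ := Relation.TransGen.tail'_iff.1 hx
    have hx' := htgt c x hcx
    exact hacyc ⟨x, hx'⟩ (Relation.transGen_swap.1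
      (Relation.TransGen.mono (fun a b h => (hparent a b).1 h) _ _ (hx.subtype htgt hx' hx')))

theorem injOn_image_inEdgeChoices :
    Set.InjOn (fun f : {i // i ≠ r} → Fin q => univ.image f) (inEdgeChoices tgt r) := by
  intro f hf f' hf' h
  rw [mem_coe, mem_inEdgeChoices] at hf hf'
  have h : univ.image f = univ.image f' := h
  funext j
  obtain ⟨j', -, hj'⟩ := mem_image.1 (h ▸ mem_image_of_mem f (mem_univ j))
  obtain rfl : j' = j := Subtype.ext (by rw [← hf' j', hj', hf j])
  exact hj'.symm

theorem exists_mem_inEdgeChoices_image_eq {S : Finset (Fin q)} (hS : IsOutTree src tgt r S) :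
    ∃ f ∈ inEdgeChoices tgt r, univ.image f = S := by
  choose f hf huniq using fun j : {i // i ≠ r} => hS.1 j j.2
  refine ⟨f, mem_inEdgeChoices.2 fun j => (hf j).2, ?_⟩
  ext k
  refine ⟨fun hk => ?_, fun hk => ?_⟩
  · obtain ⟨j, -, rfl⟩ := mem_image.1 hk
    exact (hf j).1
  · exact mem_image.2 ⟨⟨tgt k, hS.2.1 k hk⟩, mem_univ _, (huniq _ k ⟨hk, rfl⟩).symm⟩

variable (tgt r)

open scoped Classical in
theorem sum_inEdgeChoices_eq_sum_isOutTree {R : Type*} [CommSemiring R] (w : Fin q → R) :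
    ∑ f ∈ inEdgeChoices tgt r,
        (if ∀ a, ¬ Relation.TransGen (parentRel src f) a a then ∏ j, w (f j) else 0) =
      ∑ S : Finset (Fin q), if IsOutTree src tgt r S then ∏ k ∈ S, w k else 0 := by
  rw [← sum_filter, ← sum_filter]
  refine sum_bij (fun f _ => univ.image f) (fun f hf => ?_)
    (fun f hf f' hf' h => injOn_image_inEdgeChoices (mem_filter.1 hf).1 (mem_filter.1 hf').1 h)
    (fun S hS => ?_) (fun f hf => ?_)
  · rw [mem_filter] at hf ⊢
    exact ⟨mem_univ _, (isOutTree_image_iff src hf.1).2 hf.2⟩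
  · obtain ⟨f, hf, rfl⟩ := exists_mem_inEdgeChoices_image_eq src (mem_filter.1 hS).2
    exact ⟨f, mem_filter.2 ⟨hf, (isOutTree_image_iff src hf).1 (mem_filter.1 hS).2⟩, rfl⟩
  · have hf := mem_inEdgeChoices.1 (mem_filter.1 hf).1
    exact (prod_image fun j _ j' _ h => Subtype.ext (by rw [← hf j, ← hf j', h])).symm

end InEdgeChoices

open scoped Classical in
theorem weighted_tutte_outgoing_general (p q : ℕ) (src tgt : Fin q → Fin p)
    (w : Fin q → ℝ) (r : Fin p) :
    ((Dinw tgt w - Avw src tgt w).submatrix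
        (fun i : {i : Fin p // i ≠ r} => i.val)
        (fun i : {i : Fin p // i ≠ r} => i.val)).det =
      ∑ S : Finset (Fin q), if IsOutTree src tgt r S then ∏ k ∈ S, w k else 0 := by
  rw [det_reducedLaplacian_eq_sum_inEdgeChoices, ← sum_inEdgeChoices_eq_sum_isOutTree]
  refine sum_congr rfl fun f _ => ?_
  rw [det_one_sub_of_rightUnique (parentRel_rightUnique src f), mul_ite, mul_one, mul_zero]

open scoped Classical in
/-- **Weighted matrix tree theorem.** For a directed graph with positive edge weights,
`det (L_{1,w}^r)` equals the sum, over all outgoing directed spanning trees rooted at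
`v_r`, of the product of the weights of the edges of the tree. -/
theorem weighted_tutte_outgoing (p q : ℕ) (src tgt : Fin q → Fin p)
    (hloop : ∀ k, src k ≠ tgt k)
    (hsimple : Function.Injective fun k => (src k, tgt k))
    (w : Fin q → ℝ) (hw : ∀ k, 0 < w k) (r : Fin p) :
    ((Dinw tgt w - Avw src tgt w).submatrix
        (fun i : {i : Fin p // i ≠ r} => i.val)
        (fun i : {i : Fin p // i ≠ r} => i.val)).det =
      ∑ S : Finset (Fin q), if IsOutTree src tgt r S then ∏ k ∈ S, w k else 0 :=
  weighted_tutte_outgoing_general p q src tgt w r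
end

section
/- Let G_w be a weighted directed graph and define vectors x and y by x_i (resp. y_i) = sum of the weights of all weighted outgoing (resp. incoming) directed spanning trees rooted at v_i, where the weight of a tree is the product of its edge weights. Then L_{1,w} x = 0 and L_{2,w} y = 0, where L_{1,w} = D_{in,w} - A_{v,w} and L_{2,w} = D_{out,w} - A_{v,w}^T. -/
open Matrix

variable {p q : ℕ}

namespace MCTT

open Relation Function Finset
open scoped Classical

variable {p q : ℕ} (src tgt : Fin q → Fin p)

def Step (S : Finset (Fin q)) (a b : Fin p) : Prop := ∃ k ∈ S, src k = a ∧ tgt k = b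

def Func (S : Finset (Fin q)) : Prop := ∀ v : Fin p, ∃! k, k ∈ S ∧ tgt k = v

noncomputable def fE (S : Finset (Fin q)) (hS : Func tgt S) (v : Fin p) : Fin q :=
  (hS v).choose

lemma fE_mem (S : Finset (Fin q)) (hS : Func tgt S) (v : Fin p) : fE tgt S hS v ∈ S :=
  (hS v).choose_spec.1.1

lemma fE_tgt (S : Finset (Fin q)) (hS : Func tgt S) (v : Fin p) : tgt (fE tgt S hS v) = v :=
  (hS v).choose_spec.1.2

lemma fE_unique (S : Finset (Fin q)) (hS : Func tgt S) (v : Fin p) {k : Fin q}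
    (hk : k ∈ S) (ht : tgt k = v) : k = fE tgt S hS v :=
  (hS v).choose_spec.2 k ⟨hk, ht⟩

noncomputable def gP (S : Finset (Fin q)) (hS : Func tgt S) (v : Fin p) : Fin p :=
  src (fE tgt S hS v)

/-- iterating a period -/
lemma iter_mul {α : Type*} (g : α → α) {n : ℕ} {x : α} (h : g^[n] x = x) :
    ∀ s : ℕ, g^[n * s] x = x := by
  intro s
  induction s with
  | zero => simp
  | succ s ih =>
    have : n * (s + 1) = n * s + n := by ring
    rw [this, Function.iterate_add_apply, h, ih]

lemma iter_mod {α : Type*} (g : α → α) {n : ℕ} {x : α} (h : g^[n] x = x) (t : ℕ) :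
    g^[t] x = g^[t % n] x := by
  conv_lhs => rw [← Nat.mod_add_div t n, Function.iterate_add_apply, iter_mul g h _]

lemma pred_unique {α : Type*} (g : α → α) {m m' : ℕ} {x : α} (hm : 0 < m) (hm' : 0 < m')
    (h : g^[m] x = x) (h' : g^[m'] x = x) : g^[m - 1] x = g^[m' - 1] x := by
  have key : m - 1 + m' = m' - 1 + m := by omega
  calc g^[m - 1] x = g^[m - 1] (g^[m'] x) := by rw [h']
    _ = g^[m - 1 + m'] x := (Function.iterate_add_apply g _ _ x).symm
    _ = g^[m' - 1 + m] x := by rw [key]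
    _ = g^[m' - 1] (g^[m] x) := Function.iterate_add_apply g _ _ x
    _ = g^[m' - 1] x := by rw [h]

/-- Lemma D: a chain of forced edges gives a `TransGen` path. -/
lemma chain (S : Finset (Fin q)) (hS : Func tgt S) (S' : Finset (Fin q)) (v : Fin p) :
    ∀ n : ℕ, 0 < n → (∀ j < n, fE tgt S hS ((gP src tgt S hS)^[j] v) ∈ S') →
    TransGen (Step src tgt S') ((gP src tgt S hS)^[n] v) v := by
  intro n
  induction n with
  | zero => intro h; omega
  | succ n ih =>
    intro _ hj
    rcases Nat.eq_zero_or_pos n with h0 | hn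
    · subst h0
      refine TransGen.single ⟨fE tgt S hS v, hj 0 (by omega), ?_, fE_tgt ..⟩
      simp [gP]
    · refine TransGen.head ⟨fE tgt S hS ((gP src tgt S hS)^[n] v), hj n (by omega), ?_, ?_⟩
        (ih hn fun j hjn => hj j (by omega))
      · rw [Function.iterate_succ_apply']; rfl
      · exact fE_tgt ..

/-- Lemma C: a `TransGen` path inside `S' ⊆ S` is a chain of forced edges. -/
lemma transGen_chain (S : Finset (Fin q)) (hS : Func tgt S) (S' : Finset (Fin q))
    (hsub : S' ⊆ S) {u v : Fin p} (h : TransGen (Step src tgt S') u v) :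
    ∃ n : ℕ, 0 < n ∧ (gP src tgt S hS)^[n] v = u ∧
      ∀ j < n, fE tgt S hS ((gP src tgt S hS)^[j] v) ∈ S' := by
  induction h with
  | @single c hc =>
    obtain ⟨k, hkS', hks, hkt⟩ := hc
    have hk : k = fE tgt S hS c := fE_unique tgt S hS c (hsub hkS') hkt
    exact ⟨1, by omega, by simp [gP, ← hk, hks], by intro j hj; interval_cases j; simpa [← hk]⟩
  | @tail b c hab hbc ih =>
    obtain ⟨k, hkS', hks, hkt⟩ := hbc
    have hk : k = fE tgt S hS c := fE_unique tgt S hS c (hsub hkS') hkt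
    obtain ⟨n, hn, hgn, hedges⟩ := ih
    have hb : b = gP src tgt S hS c := by rw [gP, ← hk, hks]
    refine ⟨n + 1, by omega, ?_, ?_⟩
    · rw [Function.iterate_succ_apply, ← hb, hgn]
    · intro j hj
      rcases Nat.eq_zero_or_pos j with h0 | hj0
      · subst h0; simpa [← hk]
      · have : (gP src tgt S hS)^[j] c = (gP src tgt S hS)^[j-1] b := by
          rw [hb, ← Function.iterate_succ_apply]
          congr 1; omega
        rw [this]; exact hedges (j-1) (by omega)

/-- Lemma E: if removing the edge into `z` makes `S` acyclic, every vertex reaches `z`. -/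
lemma reach (S : Finset (Fin q)) (hS : Func tgt S) (z : Fin p)
    (hacyc : ∀ v, ¬ TransGen (Step src tgt (S.erase (fE tgt S hS z))) v v) (v : Fin p) :
    ∃ n : ℕ, (gP src tgt S hS)^[n] v = z := by
  by_contra hcon
  push_neg at hcon
  obtain ⟨a, b, hne, heq⟩ :=
    Finite.exists_ne_map_eq_of_infinite (fun n : ℕ => (gP src tgt S hS)^[n] v)
  wlog hab : a < b generalizing a b
  · exact this b a hne.symm heq.symm (by omega)
  set g := gP src tgt S hS with hg
  set u := g^[a] v with hu
  have hper : g^[b - a] u = u := by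
    rw [hu, ← Function.iterate_add_apply]
    have : b - a + a = b := by omega
    rw [this, ← heq]
  have hedges : ∀ j < b - a, fE tgt S hS (g^[j] u) ∈ S.erase (fE tgt S hS z) := by
    intro j hj
    refine Finset.mem_erase.2 ⟨?_, fE_mem ..⟩
    intro hfe
    have : g^[j] u = z := by
      have h1 := fE_tgt tgt S hS (g^[j] u)
      have h2 := fE_tgt tgt S hS z
      rw [hfe, h2] at h1; exact h1.symm
    exact hcon (j + a) (by rw [Function.iterate_add_apply]; exact this)
  have := chain src tgt S hS (S.erase (fE tgt S hS z)) u (b - a) (by omega) hedges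
  rw [hper] at this
  exact hacyc u this

/-! ### Configuration: a tree rooted at `r` plus one edge into `r` -/

lemma insert_func {r : Fin p} {k : Fin q} {T : Finset (Fin q)} (hk : tgt k = r)
    (hT : IsOutTree src tgt r T) : Func tgt (insert k T) := by
  intro v
  by_cases hv : v = r
  · subst hv
    refine ⟨k, ⟨mem_insert_self .., hk⟩, ?_⟩
    rintro y ⟨hy, hty⟩
    rcases mem_insert.1 hy with h | h
    · exact h
    · exact absurd hty (hT.2.1 y h)
  · obtain ⟨e, ⟨heT, het⟩, hu⟩ := hT.1 v hv
    refine ⟨e, ⟨mem_insert_of_mem heT, het⟩, ?_⟩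
    rintro y ⟨hy, hty⟩
    rcases mem_insert.1 hy with h | h
    · subst h; exact absurd (hty.symm.trans hk) hv
    · exact hu y ⟨h, hty⟩

lemma notMem_tree {r : Fin p} {k : Fin q} {T : Finset (Fin q)} (hk : tgt k = r)
    (hT : IsOutTree src tgt r T) : k ∉ T := fun h => hT.2.1 k h hk

lemma insert_fE_root {r : Fin p} {k : Fin q} {T : Finset (Fin q)} (hk : tgt k = r)
    (hT : IsOutTree src tgt r T) (hS : Func tgt (insert k T)) :
    fE tgt (insert k T) hS r = k :=
  (fE_unique tgt _ hS r (mem_insert_self k T) hk).symm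

lemma insert_reach {r : Fin p} {k : Fin q} {T : Finset (Fin q)} (hk : tgt k = r)
    (hT : IsOutTree src tgt r T) (hS : Func tgt (insert k T)) (v : Fin p) :
    ∃ n : ℕ, (gP src tgt (insert k T) hS)^[n] v = r := by
  apply reach src tgt _ hS r _ v
  rw [insert_fE_root src tgt hk hT hS, Finset.erase_insert (notMem_tree src tgt hk hT)]
  exact hT.2.2

lemma insert_per {r : Fin p} {k : Fin q} {T : Finset (Fin q)} (hk : tgt k = r)
    (hT : IsOutTree src tgt r T) (hS : Func tgt (insert k T)) :
    ∃ m : ℕ, 0 < m ∧ (gP src tgt (insert k T) hS)^[m] r = r := by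
  obtain ⟨n, hn⟩ := insert_reach src tgt hk hT hS (gP src tgt (insert k T) hS r)
  exact ⟨n + 1, by omega, by rw [Function.iterate_succ_apply]; exact hn⟩

/-! ### The cycle edge -/

noncomputable def cEdge (S : Finset (Fin q)) (hS : Func tgt S) (i : Fin p)
    (hper : ∃ m : ℕ, 0 < m ∧ (gP src tgt S hS)^[m] i = i) : Fin q :=
  fE tgt S hS ((gP src tgt S hS)^[hper.choose - 1] i)

lemma cEdge_mem (S : Finset (Fin q)) (hS : Func tgt S) (i : Fin p) (hper) :
    cEdge src tgt S hS i hper ∈ S := fE_mem ..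

lemma cEdge_src (S : Finset (Fin q)) (hS : Func tgt S) (i : Fin p) (hper) :
    src (cEdge src tgt S hS i hper) = i := by
  obtain ⟨hm, h⟩ := hper.choose_spec
  show gP src tgt S hS ((gP src tgt S hS)^[hper.choose - 1] i) = i
  rw [← Function.iterate_succ_apply' (gP src tgt S hS)]
  have heq : (hper.choose - 1).succ = hper.choose := by omega
  rw [heq, h]

lemma cEdge_tgt (S : Finset (Fin q)) (hS : Func tgt S) (i : Fin p) (hper) :
    tgt (cEdge src tgt S hS i hper) = (gP src tgt S hS)^[hper.choose - 1] i := fE_tgt ..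

lemma cEdge_eq_of (S : Finset (Fin q)) (hS : Func tgt S) (i : Fin p) (hper) {c : Fin p}
    (hc : ∃ t : ℕ, (gP src tgt S hS)^[t] i = c) (hgc : gP src tgt S hS c = i) :
    cEdge src tgt S hS i hper = fE tgt S hS c := by
  obtain ⟨t, ht⟩ := hc
  have hper' : (gP src tgt S hS)^[t + 1] i = i := by
    rw [Function.iterate_succ_apply', ht, hgc]
  unfold cEdge
  congr 1
  have := pred_unique (gP src tgt S hS) hper.choose_spec.1 (show 0 < t + 1 by omega)
    hper.choose_spec.2 hper'
  rw [this]; simpa using ht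

/-! ### Erasing an edge from a functional set gives a tree -/

lemma erase_acyclic (S : Finset (Fin q)) (hS : Func tgt S) (z : Fin p)
    (hz : ∀ v, ∃ t : ℕ, (gP src tgt S hS)^[t] v = z) (v : Fin p) :
    ¬ TransGen (Step src tgt (S.erase (fE tgt S hS z))) v v := by
  intro hcyc
  obtain ⟨n, hn, hgn, hedges⟩ :=
    transGen_chain src tgt S hS _ (Finset.erase_subset _ _) hcyc
  obtain ⟨t, ht⟩ := hz v
  have hj : (gP src tgt S hS)^[t % n] v = z := by rw [← iter_mod _ hgn, ht]
  have hmem := hedges (t % n) (Nat.mod_lt _ hn)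
  rw [hj] at hmem
  exact (Finset.mem_erase.1 hmem).1 rfl

lemma isOutTree_erase (S : Finset (Fin q)) (hS : Func tgt S) (e : Fin q) (heS : e ∈ S)
    (hz : ∀ v, ∃ t : ℕ, (gP src tgt S hS)^[t] v = tgt e) :
    IsOutTree src tgt (tgt e) (S.erase e) := by
  have hfe : e = fE tgt S hS (tgt e) := fE_unique tgt S hS (tgt e) heS rfl
  refine ⟨?_, ?_, ?_⟩
  · intro v hv
    refine ⟨fE tgt S hS v, ⟨Finset.mem_erase.2 ⟨?_, fE_mem ..⟩, fE_tgt ..⟩, ?_⟩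
    · intro h
      apply hv
      rw [← fE_tgt tgt S hS v, h]
    · rintro y ⟨hy, hty⟩
      exact fE_unique tgt S hS v (Finset.mem_erase.1 hy).2 hty
  · intro k hk hkt
    apply (Finset.mem_erase.1 hk).1
    rw [hfe]
    exact fE_unique tgt S hS (tgt e) (Finset.mem_erase.1 hk).2 hkt
  · intro v
    rw [show (fun a b => ∃ k ∈ S.erase e, src k = a ∧ tgt k = b) = Step src tgt (S.erase e) from rfl]
    rw [hfe]
    exact erase_acyclic src tgt S hS (tgt e) (hfe ▸ hz) v

/-! ### The bijection -/

lemma fE_congr {S S' : Finset (Fin q)} (hEq : S = S') (hS : Func tgt S) (hS' : Func tgt S')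
    (v : Fin p) : fE tgt S hS v = fE tgt S' hS' v := by subst hEq; rfl

lemma cEdge_congr {S S' : Finset (Fin q)} (hEq : S = S') (hS : Func tgt S) (hS' : Func tgt S')
    (i : Fin p) (hper) (hper') :
    cEdge src tgt S hS i hper = cEdge src tgt S' hS' i hper' := by subst hEq; rfl

noncomputable def Phi (i : Fin p) (z : Fin q × Finset (Fin q))
    (h : tgt z.1 = i ∧ IsOutTree src tgt i z.2) : Fin q × Finset (Fin q) :=
  (cEdge src tgt (insert z.1 z.2) (insert_func src tgt h.1 h.2) i
      (insert_per src tgt h.1 h.2 (insert_func src tgt h.1 h.2)),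
   (insert z.1 z.2).erase (cEdge src tgt (insert z.1 z.2) (insert_func src tgt h.1 h.2) i
      (insert_per src tgt h.1 h.2 (insert_func src tgt h.1 h.2))))

noncomputable def Psi (i : Fin p) (z : Fin q × Finset (Fin q))
    (h : src z.1 = i ∧ IsOutTree src tgt (tgt z.1) z.2) : Fin q × Finset (Fin q) :=
  (fE tgt (insert z.1 z.2) (insert_func src tgt rfl h.2) i,
   (insert z.1 z.2).erase (fE tgt (insert z.1 z.2) (insert_func src tgt rfl h.2) i))

lemma Phi_mem (i : Fin p) (z : Fin q × Finset (Fin q))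
    (h : tgt z.1 = i ∧ IsOutTree src tgt i z.2) :
    src (Phi src tgt i z h).1 = i ∧
      IsOutTree src tgt (tgt (Phi src tgt i z h).1) (Phi src tgt i z h).2 := by
  refine ⟨cEdge_src .., ?_⟩
  apply isOutTree_erase src tgt _ (insert_func src tgt h.1 h.2) _ (cEdge_mem ..)
  intro v
  obtain ⟨t, ht⟩ := insert_reach src tgt h.1 h.2 (insert_func src tgt h.1 h.2) v
  refine ⟨(insert_per src tgt h.1 h.2 (insert_func src tgt h.1 h.2)).choose - 1 + t, ?_⟩
  rw [Function.iterate_add_apply, ht]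
  exact (cEdge_tgt src tgt _ _ _ _).symm

lemma Psi_mem (i : Fin p) (z : Fin q × Finset (Fin q))
    (h : src z.1 = i ∧ IsOutTree src tgt (tgt z.1) z.2) :
    tgt (Psi src tgt i z h).1 = i ∧ IsOutTree src tgt i (Psi src tgt i z h).2 := by
  have h1 : tgt (fE tgt (insert z.1 z.2) (insert_func src tgt rfl h.2) i) = i := fE_tgt ..
  refine ⟨h1, ?_⟩
  have key := isOutTree_erase src tgt (insert z.1 z.2) (insert_func src tgt rfl h.2)
    (fE tgt (insert z.1 z.2) (insert_func src tgt rfl h.2) i) (fE_mem ..) ?_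
  · rwa [h1] at key
  · intro v
    obtain ⟨t, ht⟩ := insert_reach src tgt rfl h.2 (insert_func src tgt rfl h.2) v
    refine ⟨t + 1, ?_⟩
    rw [Function.iterate_succ_apply', ht, h1]
    show src (fE tgt (insert z.1 z.2) (insert_func src tgt rfl h.2) (tgt z.1)) = i
    rw [insert_fE_root src tgt rfl h.2]
    exact h.1

lemma PsiPhi (i : Fin p) (z : Fin q × Finset (Fin q))
    (h : tgt z.1 = i ∧ IsOutTree src tgt i z.2)
    (h2 : src (Phi src tgt i z h).1 = i ∧
      IsOutTree src tgt (tgt (Phi src tgt i z h).1) (Phi src tgt i z h).2) :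
    Psi src tgt i (Phi src tgt i z h) h2 = z := by
  have hIns : insert (Phi src tgt i z h).1 (Phi src tgt i z h).2 = insert z.1 z.2 :=
    Finset.insert_erase (cEdge_mem ..)
  have hfE : fE tgt (insert (Phi src tgt i z h).1 (Phi src tgt i z h).2)
      (insert_func src tgt rfl h2.2) i = z.1 := by
    rw [fE_congr tgt hIns _ (insert_func src tgt h.1 h.2)]
    exact (fE_unique tgt _ (insert_func src tgt h.1 h.2) i (mem_insert_self _ _) h.1).symm
  show (_, _) = z
  rw [hfE, hIns, Finset.erase_insert (notMem_tree src tgt h.1 h.2)]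

lemma PhiPsi (i : Fin p) (z : Fin q × Finset (Fin q))
    (h : src z.1 = i ∧ IsOutTree src tgt (tgt z.1) z.2)
    (h2 : tgt (Psi src tgt i z h).1 = i ∧ IsOutTree src tgt i (Psi src tgt i z h).2) :
    Phi src tgt i (Psi src tgt i z h) h2 = z := by
  have hIns : insert (Psi src tgt i z h).1 (Psi src tgt i z h).2 = insert z.1 z.2 :=
    Finset.insert_erase (fE_mem ..)
  set S := insert z.1 z.2 with hs
  set hS := insert_func src tgt (rfl : tgt z.1 = tgt z.1) h.2 with hhs
  have hgc : gP src tgt S hS (tgt z.1) = i := by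
    show src (fE tgt S hS (tgt z.1)) = i
    rw [insert_fE_root src tgt rfl h.2]
    exact h.1
  have hc := insert_reach src tgt rfl h.2 hS i
  have hperS : ∃ m : ℕ, 0 < m ∧ (gP src tgt S hS)^[m] i = i := by
    obtain ⟨t, ht⟩ := hc
    exact ⟨t + 1, by omega, by rw [Function.iterate_succ_apply', ht, hgc]⟩
  have he : cEdge src tgt S hS i hperS = z.1 := by
    rw [cEdge_eq_of src tgt S hS i hperS hc hgc]
    exact (fE_unique tgt S hS (tgt z.1) (mem_insert_self _ _) rfl).symm
  have hE : cEdge src tgt (insert (Psi src tgt i z h).1 (Psi src tgt i z h).2)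
      (insert_func src tgt h2.1 h2.2) i
      (insert_per src tgt h2.1 h2.2 (insert_func src tgt h2.1 h2.2)) = z.1 := by
    rw [cEdge_congr src tgt hIns _ hS i _ hperS]
    exact he
  show (_, _) = z
  rw [hE, hIns, Finset.erase_insert (notMem_tree src tgt rfl h.2)]


lemma Phi_weight (i : Fin p) (z : Fin q × Finset (Fin q))
    (h : tgt z.1 = i ∧ IsOutTree src tgt i z.2) (w : Fin q → ℝ) :
    w z.1 * ∏ k ∈ z.2, w k = w (Phi src tgt i z h).1 * ∏ k ∈ (Phi src tgt i z h).2, w k := by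
  rw [← Finset.prod_insert (notMem_tree src tgt h.1 h.2)]
  exact (Finset.mul_prod_erase _ w (cEdge_mem src tgt _ _ i _)).symm

lemma ite_mul_ite {P Q : Prop} [Decidable P] [Decidable Q] (a b : ℝ) :
    (if P then a else 0) * (if Q then b else 0) = if P ∧ Q then a * b else 0 := by
  by_cases hP : P <;> by_cases hQ : Q <;> simp [hP, hQ]

lemma row (src tgt : Fin q → Fin p) (i : Fin p) (w : Fin q → ℝ)
    (P : Fin p → Finset (Fin q) → Prop)
    (hkey : ∑ z : Fin q × Finset (Fin q),
        (if tgt z.1 = i ∧ P i z.2 then w z.1 * ∏ k ∈ z.2, w k else 0)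
      = ∑ z : Fin q × Finset (Fin q),
        (if src z.1 = i ∧ P (tgt z.1) z.2 then w z.1 * ∏ k ∈ z.2, w k else 0)) :
    (∑ k, if tgt k = i then w k else 0) *
      (∑ S : Finset (Fin q), if P i S then ∏ k ∈ S, w k else 0)
    = ∑ j, (∑ k, if src k = i ∧ tgt k = j then w k else 0) *
      (∑ S : Finset (Fin q), if P j S then ∏ k ∈ S, w k else 0) := by
  have lhs : (∑ k, if tgt k = i then w k else 0) *
      (∑ S : Finset (Fin q), if P i S then ∏ k ∈ S, w k else 0)
      = ∑ z : Fin q × Finset (Fin q),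
        (if tgt z.1 = i ∧ P i z.2 then w z.1 * ∏ k ∈ z.2, w k else 0) := by
    rw [Finset.sum_mul_sum, Fintype.sum_prod_type]
    exact Finset.sum_congr rfl fun k _ => Finset.sum_congr rfl fun S _ => ite_mul_ite _ _
  have rhs : ∀ j : Fin p, (∑ k, if src k = i ∧ tgt k = j then w k else 0) *
      (∑ S : Finset (Fin q), if P j S then ∏ k ∈ S, w k else 0)
      = ∑ k, ∑ S : Finset (Fin q),
          (if (src k = i ∧ tgt k = j) ∧ P j S then w k * ∏ e ∈ S, w e else 0) := by
    intro j
    rw [Finset.sum_mul_sum]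
    exact Finset.sum_congr rfl fun k _ => Finset.sum_congr rfl fun S _ => ite_mul_ite _ _
  rw [lhs, hkey, Fintype.sum_prod_type,
      Finset.sum_congr rfl fun j _ => rhs j]
  conv_rhs => rw [Finset.sum_comm]
  refine Finset.sum_congr rfl fun k _ => ?_
  conv_rhs => rw [Finset.sum_comm]
  refine Finset.sum_congr rfl fun S _ => ?_
  by_cases h1 : src k = i
  · by_cases h2 : P (tgt k) S
    · rw [Finset.sum_eq_single (tgt k)]
      · simp [h1, h2]
      · intro j _ hj
        exact if_neg (fun hh => hj hh.1.2.symm)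
      · simp
    · rw [if_neg (fun hh => h2 hh.2)]
      symm
      apply Finset.sum_eq_zero
      intro j _
      apply if_neg
      rintro ⟨⟨-, h3⟩, h4⟩
      exact h2 (h3 ▸ h4)
  · rw [if_neg (fun hh => h1 hh.1)]
    symm
    apply Finset.sum_eq_zero
    intro j _
    exact if_neg (fun hh => h1 hh.1.1)

lemma key (i : Fin p) (w : Fin q → ℝ) :
    ∑ z : Fin q × Finset (Fin q),
        (if tgt z.1 = i ∧ IsOutTree src tgt i z.2 then w z.1 * ∏ k ∈ z.2, w k else 0)
      = ∑ z : Fin q × Finset (Fin q),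
        (if src z.1 = i ∧ IsOutTree src tgt (tgt z.1) z.2 then w z.1 * ∏ k ∈ z.2, w k else 0) := by
  rw [← Finset.sum_filter, ← Finset.sum_filter]
  refine Finset.sum_bij' (fun z hz => Phi src tgt i z (Finset.mem_filter.1 hz).2)
    (fun z hz => Psi src tgt i z (Finset.mem_filter.1 hz).2) ?_ ?_ ?_ ?_ ?_
  · intro a ha
    exact Finset.mem_filter.2 ⟨Finset.mem_univ _, Phi_mem src tgt i a (Finset.mem_filter.1 ha).2⟩
  · intro a ha
    exact Finset.mem_filter.2 ⟨Finset.mem_univ _, Psi_mem src tgt i a (Finset.mem_filter.1 ha).2⟩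
  · intro a ha
    exact PsiPhi src tgt i a _ _
  · intro a ha
    exact PhiPsi src tgt i a _ _
  · intro a ha
    exact Phi_weight src tgt i a _ w

lemma main (w : Fin q → ℝ) :
    (Dinw tgt w - Avw src tgt w) *ᵥ
      (fun i => ∑ S : Finset (Fin q), if IsOutTree src tgt i S then ∏ k ∈ S, w k else 0)
        = 0 := by
  funext i
  rw [Matrix.sub_mulVec]
  simp only [Pi.sub_apply, Pi.zero_apply, sub_eq_zero]
  rw [Dinw, Matrix.mulVec_diagonal]
  have hrow := row src tgt i w (fun j S => IsOutTree src tgt j S) (key src tgt i w)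
  rw [hrow]
  simp only [Matrix.mulVec, dotProduct, Avw, Matrix.of_apply]

end MCTT

open scoped Classical in
/-- The vectors of sums of weights of outgoing (resp. incoming) weighted directed
spanning trees rooted at each vertex satisfy `L_{1,w} x = 0` and `L_{2,w} y = 0`. -/
theorem weighted_laplacians_mulVec_tree_weights (p q : ℕ) (src tgt : Fin q → Fin p)
    (hloop : ∀ k, src k ≠ tgt k)
    (hsimple : Function.Injective fun k => (src k, tgt k))
    (w : Fin q → ℝ) (hw : ∀ k, 0 < w k) :
    (Dinw tgt w - Avw src tgt w) *ᵥ
      (fun i => ∑ S : Finset (Fin q), if IsOutTree src tgt i S then ∏ k ∈ S, w k else 0)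
        = 0 ∧
    (Doutw src w - (Avw src tgt w)ᵀ) *ᵥ
      (fun i => ∑ S : Finset (Fin q), if IsInTree src tgt i S then ∏ k ∈ S, w k else 0)
        = 0 := by
  constructor
  · exact MCTT.main src tgt w
  · have hD : Doutw src w = Dinw src w := rfl
    have hA : (Avw src tgt w)ᵀ = Avw tgt src w := by
      ext i j
      simp only [Avw, Matrix.transpose_apply, Matrix.of_apply]
      exact Finset.sum_congr rfl fun k _ => if_congr and_comm rfl rfl
    have hswap : ∀ r S, IsInTree src tgt r S ↔ IsOutTree tgt src r S := by
      intro r S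
      unfold IsInTree IsOutTree
      have hrel : (fun a b => ∃ k ∈ S, tgt k = a ∧ src k = b)
          = Function.swap (fun a b => ∃ k ∈ S, src k = a ∧ tgt k = b) := by
        funext a b
        simp only [Function.swap]
        apply propext
        constructor
        · rintro ⟨k, hk, h1, h2⟩; exact ⟨k, hk, h2, h1⟩
        · rintro ⟨k, hk, h1, h2⟩; exact ⟨k, hk, h2, h1⟩
      constructor <;> rintro ⟨a, b, c⟩ <;> refine ⟨a, b, fun v => ?_⟩
      · rw [hrel]
        intro hcon
        exact c v (Relation.transGen_swap.1 hcon)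
      · intro hcon
        rw [hrel] at c
        exact c v (Relation.transGen_swap.2 hcon)
    have hvec : (fun i => ∑ S : Finset (Fin q), if IsInTree src tgt i S then ∏ k ∈ S, w k else 0)
        = (fun i => ∑ S : Finset (Fin q), if IsOutTree tgt src i S then ∏ k ∈ S, w k else 0) := by
      funext i
      exact Finset.sum_congr rfl fun S _ => if_congr (hswap i S) rfl rfl
    rw [hD, hA, hvec]
    exact MCTT.main tgt src w
end
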